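/- arXiv:2505.14713 — 8 statements merged into one kernel-verified Lean document; each statement's English description precedes it below -/
import Mathlib

section
/- Fix y ∈ ℝ. The function κ ↦ exp_κ(y) on (0,∞) is monotonically decreasing in κ when y ≥ 0 and monotonically increasing in κ when y < 0. Consequently, for every κ > 0: exp_κ(y) ≤ exp(y) whenever y ≥ 0, and exp_κ(y) ≥ exp(y) whenever y < 0 (with the natural exponential exp as the respective upper/lower bound). -/
/-- The Kaniadakis κ-exponential: `expK κ y = (√(1 + κ²y²) + κy)^(1/κ)`. -/
noncomputable def expK (κ y : ℝ) : ℝ := (Real.sqrt (1 + κ ^ 2 * y ^ 2) + κ * y) ^ (1 / κ)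

open Real

private lemma sqrt_one_add_sq_pos (t : ℝ) : 0 < Real.sqrt (1 + t ^ 2) :=
  Real.sqrt_pos.2 (by positivity)

private lemma sq_sqrt_one_add_sq (t : ℝ) : Real.sqrt (1 + t ^ 2) ^ 2 = 1 + t ^ 2 :=
  Real.sq_sqrt (by positivity)

private lemma hasDerivAt_sqrt_one_add_sq (t : ℝ) :
    HasDerivAt (fun t : ℝ => Real.sqrt (1 + t ^ 2)) (t / Real.sqrt (1 + t ^ 2)) t := by
  have h1 : HasDerivAt (fun t : ℝ => 1 + t ^ 2) (2 * t) t := by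
    simpa using ((hasDerivAt_pow 2 t).const_add 1)
  have h2 := (Real.hasDerivAt_sqrt (x := 1 + t ^ 2) (by positivity)).comp t h1
  refine h2.congr_deriv ?_
  field_simp

/-- derivative fact: `t / √(1+t²)` has derivative with nice numerator form. -/
private lemma hasDerivAt_ratio (t : ℝ) :
    HasDerivAt (fun t : ℝ => t / Real.sqrt (1 + t ^ 2))
      ((1 * Real.sqrt (1 + t ^ 2) - t * (t / Real.sqrt (1 + t ^ 2))) /
        (Real.sqrt (1 + t ^ 2)) ^ 2) t :=
  (hasDerivAt_id t).div (hasDerivAt_sqrt_one_add_sq t) (sqrt_one_add_sq_pos t).ne'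

/-- `t/√(1+t²) ≤ arsinh t` for `t ≥ 0`, and reverse for `t ≤ 0`. -/
private lemma key_ineq :
    Monotone (fun t : ℝ => Real.arsinh t - t / Real.sqrt (1 + t ^ 2)) := by
  apply monotone_of_hasDerivAt_nonneg
    (f' := fun t : ℝ => t ^ 2 / Real.sqrt (1 + t ^ 2) ^ 3)
  · intro t
    have hs := sqrt_one_add_sq_pos t
    have hsq := sq_sqrt_one_add_sq t
    refine ((Real.hasDerivAt_arsinh t).sub (hasDerivAt_ratio t)).congr_deriv ?_
    rw [show (Real.sqrt (1 + t ^ 2)) ^ 3 = (1 + t ^ 2) * Real.sqrt (1 + t ^ 2) from by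
      rw [pow_succ, hsq]]
    field_simp
    linear_combination (-t ^ 2) * hsq
  · exact Pi.le_def.mpr fun t => by positivity

private lemma ratio_le_arsinh {t : ℝ} (ht : 0 ≤ t) :
    t / Real.sqrt (1 + t ^ 2) ≤ Real.arsinh t := by
  have := key_ineq ht
  simp only [Real.arsinh_zero, zero_div, sub_zero, zero_sub] at this
  linarith

/-- `arsinh t ≤ t` for `t ≥ 0`. -/
private lemma arsinh_le_self {t : ℝ} (ht : 0 ≤ t) : Real.arsinh t ≤ t := by
  rw [← Real.sinh_le_sinh, Real.sinh_arsinh]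
  exact Real.self_le_sinh_iff.2 ht

/-- `t ≤ arsinh t` for `t ≤ 0`. -/
private lemma self_le_arsinh {t : ℝ} (ht : t ≤ 0) : t ≤ Real.arsinh t := by
  rw [← Real.sinh_le_sinh, Real.sinh_arsinh]
  rcases lt_or_eq_of_le ht with h | h
  · exact (Real.sinh_lt_self_iff.2 h).le
  · simp [h]

/-- `arsinh t / t` is antitone on `(0, ∞)`. -/
private lemma G_antitone :
    AntitoneOn (fun t : ℝ => Real.arsinh t / t) (Set.Ioi 0) := by
  have hderiv : ∀ t : ℝ, t ∈ Set.Ioi (0 : ℝ) →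
      HasDerivAt (fun t : ℝ => Real.arsinh t / t)
        (((Real.sqrt (1 + t ^ 2))⁻¹ * t - Real.arsinh t * 1) / t ^ 2) t := by
    intro t ht
    exact (Real.hasDerivAt_arsinh t).div (hasDerivAt_id t) (ne_of_gt ht)
  apply antitoneOn_of_deriv_nonpos (convex_Ioi 0)
  · exact (Real.continuous_arsinh.continuousOn).div continuousOn_id
      (fun t ht => ne_of_gt ht)
  · rw [interior_Ioi]
    exact fun t ht => (hderiv t ht).differentiableAt.differentiableWithinAt
  · rw [interior_Ioi]
    intro t ht
    rw [(hderiv t ht).deriv]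
    have ht' : (0 : ℝ) < t := ht
    have hnum : (Real.sqrt (1 + t ^ 2))⁻¹ * t - Real.arsinh t * 1 ≤ 0 := by
      have := ratio_le_arsinh ht'.le
      rw [div_eq_inv_mul] at this
      linarith
    exact div_nonpos_of_nonpos_of_nonneg hnum (by positivity)

/-- Rewriting `expK` via `arsinh` and `exp`, for `κ > 0`. -/
private lemma expK_eq {κ : ℝ} (hκ : 0 < κ) (y : ℝ) :
    expK κ y = Real.exp (Real.arsinh (κ * y) / κ) := by
  have hbase : Real.sqrt (1 + κ ^ 2 * y ^ 2) + κ * y = Real.exp (Real.arsinh (κ * y)) := by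
    rw [Real.exp_arsinh]
    ring_nf
  rw [expK, hbase, Real.rpow_def_of_pos (Real.exp_pos _), Real.log_exp]
  ring_nf

/-- The core comparison in the exponent: for `0 < a ≤ b`,
`arsinh (b*y)/b ≤ arsinh (a*y)/a` when `0 ≤ y`. -/
private lemma exponent_antitone {a b y : ℝ} (ha : 0 < a) (hab : a ≤ b) (hy : 0 < y) :
    Real.arsinh (b * y) / b ≤ Real.arsinh (a * y) / a := by
  have hb : 0 < b := lt_of_lt_of_le ha hab
  have hay : (0 : ℝ) < a * y := by positivity
  have hby : (0 : ℝ) < b * y := by positivity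
  have hG := G_antitone hay hby (by nlinarith)
  -- hG : arsinh (b*y)/(b*y) ≤ arsinh (a*y)/(a*y)
  have := mul_le_mul_of_nonneg_left hG hy.le
  calc Real.arsinh (b * y) / b = y * (Real.arsinh (b * y) / (b * y)) := by
        field_simp
    _ ≤ y * (Real.arsinh (a * y) / (a * y)) := this
    _ = Real.arsinh (a * y) / a := by field_simp

/-- For fixed `y`, the κ-exponential is antitone in `κ` on `(0,∞)` when `y ≥ 0`
and monotone in `κ` on `(0,∞)` when `y < 0`; hence the natural exponential is an
upper bound when `y ≥ 0` and a lower bound when `y < 0`. -/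
theorem expK_kappa_monotone_and_exp_bounds (y : ℝ) :
    (0 ≤ y → AntitoneOn (fun κ : ℝ => expK κ y) (Set.Ioi 0)) ∧
    (y < 0 → MonotoneOn (fun κ : ℝ => expK κ y) (Set.Ioi 0)) ∧
    (∀ κ : ℝ, 0 < κ →
      (0 ≤ y → expK κ y ≤ Real.exp y) ∧ (y < 0 → Real.exp y ≤ expK κ y)) := by
  refine ⟨?_, ?_, ?_⟩
  · -- Antitone when 0 ≤ y
    intro hy a ha b hb hab
    rcases eq_or_lt_of_le hy with h0 | hy'
    · -- y = 0 : constant 1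
      have : ∀ κ : ℝ, expK κ 0 = 1 := fun κ => by
        simp [expK]
      simp only [← h0, this]
      exact le_rfl
    · show expK b y ≤ expK a y
      rw [expK_eq (Set.mem_Ioi.1 ha) y, expK_eq (Set.mem_Ioi.1 hb) y]
      exact Real.exp_le_exp.2 (exponent_antitone (Set.mem_Ioi.1 ha) hab hy')
  · -- Monotone when y < 0
    intro hy a ha b hb hab
    have ha' := Set.mem_Ioi.1 ha
    have hb' := Set.mem_Ioi.1 hb
    show expK a y ≤ expK b y
    rw [expK_eq ha' y, expK_eq hb' y]
    apply Real.exp_le_exp.2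
    have hz : 0 < -y := by linarith
    have h := exponent_antitone ha' hab hz
    have e1 : Real.arsinh (a * y) / a = -(Real.arsinh (a * -y) / a) := by
      rw [show a * -y = -(a * y) by ring, Real.arsinh_neg]; ring
    have e2 : Real.arsinh (b * y) / b = -(Real.arsinh (b * -y) / b) := by
      rw [show b * -y = -(b * y) by ring, Real.arsinh_neg]; ring
    rw [e1, e2]
    linarith
  · -- Bounds
    intro κ hκ
    constructor
    · intro hy
      rw [expK_eq hκ y]
      apply Real.exp_le_exp.2
      have := arsinh_le_self (t := κ * y) (by positivity)
      rw [div_le_iff₀ hκ]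
      linarith [this]
    · intro hy
      rw [expK_eq hκ y]
      apply Real.exp_le_exp.2
      have hky : κ * y ≤ 0 := by nlinarith
      have := self_le_arsinh hky
      rw [le_div_iff₀ hκ]
      linarith [this]
end

section
/- Define g : ℝ → ℝ by g(u) := −√(1 + u²)·ln(√(1 + u²) + u) + u. Then g is strictly decreasing on ℝ and g(0) = 0; hence g(u) < 0 for all u > 0 and g(u) > 0 for all u < 0. -/
/-!
Since `log (√(1 + u²) + u) = arsinh u`, we have `g u = u - √(1 + u²) · arsinh u`, whose
derivative is `-u · arsinh u / √(1 + u²)`. This is negative away from `u = 0`, as `arsinh`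
has the sign of its argument, so `g` is strictly decreasing on each side of `0`, hence on `ℝ`.
-/

open Real

/-- The auxiliary function `g(u) = -√(1+u²)·ln(√(1+u²)+u) + u` appearing in the
κ-derivative of the κ-exponential. -/
noncomputable def gAux (u : ℝ) : ℝ :=
  -Real.sqrt (1 + u ^ 2) * Real.log (Real.sqrt (1 + u ^ 2) + u) + u

lemma strictAnti_of_hasDerivAt_neg_of_ne {f f' : ℝ → ℝ} (a : ℝ)
    (hf : ∀ x, HasDerivAt f (f' x) x) (hf' : ∀ x ≠ a, f' x < 0) : StrictAnti f := by
  have hcont : Continuous f := continuous_iff_continuousAt.2 fun x ↦ (hf x).continuousAt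
  refine StrictAntiOn.Iic_union_Ici (a := a) ?_ ?_
  · refine strictAntiOn_of_hasDerivWithinAt_neg (convex_Iic a) hcont.continuousOn
      (fun x _ ↦ (hf x).hasDerivWithinAt) fun x hx ↦ hf' x ?_
    rw [interior_Iic] at hx
    exact hx.ne
  · refine strictAntiOn_of_hasDerivWithinAt_neg (convex_Ici a) hcont.continuousOn
      (fun x _ ↦ (hf x).hasDerivWithinAt) fun x hx ↦ hf' x ?_
    rw [interior_Ici] at hx
    exact hx.ne'

lemma mul_arsinh_self_pos {u : ℝ} (hu : u ≠ 0) : 0 < u * arsinh u := by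
  rcases hu.lt_or_gt with h | h
  · exact mul_pos_of_neg_of_neg h (arsinh_neg_iff.2 h)
  · exact mul_pos h (arsinh_pos_iff.2 h)

lemma gAux_eq_sub_sqrt_mul_arsinh : gAux = fun u ↦ u - √(1 + u ^ 2) * arsinh u := by
  ext u
  rw [gAux, arsinh, add_comm u]
  ring

lemma hasDerivAt_gAux (u : ℝ) :
    HasDerivAt gAux (-(u * arsinh u / √(1 + u ^ 2))) u := by
  have hsqrt : HasDerivAt (fun x ↦ √(1 + x ^ 2)) (2 * u / (2 * √(1 + u ^ 2))) u := by
    simpa using ((hasDerivAt_pow 2 u).const_add 1).sqrt (by positivity)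
  rw [gAux_eq_sub_sqrt_mul_arsinh]
  refine ((hasDerivAt_id' u).fun_sub (hsqrt.fun_mul (hasDerivAt_arsinh u))).congr_deriv ?_
  field_simp
  ring

lemma gAux_strictAnti : StrictAnti gAux :=
  strictAnti_of_hasDerivAt_neg_of_ne 0 hasDerivAt_gAux fun u hu ↦
    neg_neg_of_pos (div_pos (mul_arsinh_self_pos hu) (sqrt_pos.2 (by positivity)))

/-- `g` is strictly decreasing, vanishes at `0`, and is therefore negative on `(0,∞)`
and positive on `(-∞,0)`. -/
theorem gAux_strictAnti_and_signs :
    StrictAnti gAux ∧ gAux 0 = 0 ∧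
    (∀ u : ℝ, 0 < u → gAux u < 0) ∧ (∀ u : ℝ, u < 0 → 0 < gAux u) := by
  have hzero : gAux 0 = 0 := by simp [gAux]
  refine ⟨gAux_strictAnti, hzero, fun u hu ↦ ?_, fun u hu ↦ ?_⟩
  · simpa [hzero] using gAux_strictAnti hu
  · simpa [hzero] using gAux_strictAnti hu
end

section
/- For every κ > 1, let x₊ := ((κ+1)/(κ−1))^{1/(2κ)}. Then the function x ↦ ln_κ(x) is concave on the interval (0, x₊] and convex on the interval [x₊, ∞); in particular x₊ is an inflection point of ln_κ. -/
/-- The Kaniadakis κ-logarithm: `lnK κ x = (x^κ - x^(-κ))/(2κ)`. -/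
noncomputable def lnK (κ x : ℝ) : ℝ := (x ^ κ - x ^ (-κ)) / (2 * κ)

lemma lnK_hasDerivAt (κ : ℝ) (hκ : 0 < κ) {x : ℝ} (hx : 0 < x) :
    HasDerivAt (fun x => lnK κ x) ((x ^ (κ - 1) + x ^ (-κ - 1)) / 2) x := by
  have h1 : HasDerivAt (fun x : ℝ => x ^ κ) (κ * x ^ (κ - 1)) x :=
    Real.hasDerivAt_rpow_const (Or.inl hx.ne')
  have h2 : HasDerivAt (fun x : ℝ => x ^ (-κ)) (-κ * x ^ (-κ - 1)) x :=
    Real.hasDerivAt_rpow_const (Or.inl hx.ne')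
  have := ((h1.sub h2).div_const (2 * κ))
  refine this.congr_deriv ?_
  field_simp
  ring

lemma lnK_deriv2 (κ : ℝ) (hκ : 0 < κ) {x : ℝ} (hx : 0 < x) :
    HasDerivAt (deriv (fun x => lnK κ x))
      (((κ - 1) * x ^ (κ - 2) + (-κ - 1) * x ^ (-κ - 2)) / 2) x := by
  have h1 : HasDerivAt (fun x : ℝ => x ^ (κ - 1)) ((κ - 1) * x ^ (κ - 1 - 1)) x :=
    Real.hasDerivAt_rpow_const (Or.inl hx.ne')
  have h2 : HasDerivAt (fun x : ℝ => x ^ (-κ - 1)) ((-κ - 1) * x ^ (-κ - 1 - 1)) x :=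
    Real.hasDerivAt_rpow_const (Or.inl hx.ne')
  have key : HasDerivAt (fun x : ℝ => (x ^ (κ - 1) + x ^ (-κ - 1)) / 2)
      (((κ - 1) * x ^ (κ - 2) + (-κ - 1) * x ^ (-κ - 2)) / 2) x := by
    have := (h1.add h2).div_const 2
    refine this.congr_deriv ?_
    ring_nf
  apply key.congr_of_eventuallyEq
  filter_upwards [eventually_gt_nhds hx] with y hy
  exact (lnK_hasDerivAt κ hκ hy).deriv

/-- For `κ > 1`, with inflection point `x₊ = ((κ+1)/(κ-1))^(1/(2κ))`,
the κ-logarithm is concave on `(0, x₊]` and convex on `[x₊, ∞)`. -/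
theorem lnK_concave_convex_inflection (κ : ℝ) (hκ : 1 < κ) :
    ConcaveOn ℝ (Set.Ioc 0 (((κ + 1) / (κ - 1)) ^ (1 / (2 * κ)))) (fun x => lnK κ x) ∧
    ConvexOn ℝ (Set.Ici (((κ + 1) / (κ - 1)) ^ (1 / (2 * κ)))) (fun x => lnK κ x) := by
  have hκ0 : (0:ℝ) < κ := by linarith
  set c : ℝ := (κ + 1) / (κ - 1) with hc
  have hc0 : 0 < c := div_pos (by linarith) (by linarith)
  set xp : ℝ := c ^ (1 / (2 * κ)) with hxp
  have hxp0 : 0 < xp := Real.rpow_pos_of_pos hc0 _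
  have hxppow : xp ^ (2 * κ) = c := by
    rw [hxp, ← Real.rpow_mul hc0.le, one_div, inv_mul_cancel₀ (by positivity), Real.rpow_one]
  have hderiv2 : ∀ x : ℝ, 0 < x → deriv^[2] (fun x => lnK κ x) x =
      ((κ - 1) * x ^ (κ - 2) + (-κ - 1) * x ^ (-κ - 2)) / 2 := fun x hx =>
    (lnK_deriv2 κ hκ0 hx).deriv
  have hident : ∀ x : ℝ, 0 < x →
      (((κ - 1) * x ^ (κ - 2) + (-κ - 1) * x ^ (-κ - 2)) / 2) * (2 * x ^ (κ + 2)) =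
        (κ - 1) * x ^ (2 * κ) - (κ + 1) := by
    intro x hx
    have e1 : x ^ (κ - 2) * x ^ (κ + 2) = x ^ (2 * κ) := by
      rw [← Real.rpow_add hx]; ring_nf
    have e2 : x ^ (-κ - 2) * x ^ (κ + 2) = 1 := by
      rw [← Real.rpow_add hx, show -κ - 2 + (κ + 2) = 0 by ring, Real.rpow_zero]
    nlinarith [e1, e2]
  constructor
  · apply concaveOn_of_deriv2_nonpos (convex_Ioc 0 xp)
    · exact fun x hx => (lnK_hasDerivAt κ hκ0 hx.1).continuousAt.continuousWithinAt
    · intro x hx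
      rw [interior_Ioc] at hx
      exact (lnK_hasDerivAt κ hκ0 hx.1).differentiableAt.differentiableWithinAt
    · intro x hx
      rw [interior_Ioc] at hx
      exact (lnK_deriv2 κ hκ0 hx.1).differentiableAt.differentiableWithinAt
    · intro x hx
      rw [interior_Ioc] at hx
      rw [hderiv2 x hx.1]
      have hle : x ^ (2 * κ) ≤ c := by
        rw [← hxppow]
        exact Real.rpow_le_rpow hx.1.le hx.2.le (by positivity)
      rw [hc, le_div_iff₀ (by linarith)] at hle
      nlinarith [hident x hx.1, Real.rpow_pos_of_pos hx.1 (κ + 2)]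
  · apply convexOn_of_deriv2_nonneg (convex_Ici xp)
    · exact fun x hx => (lnK_hasDerivAt κ hκ0 (lt_of_lt_of_le hxp0 hx)).continuousAt.continuousWithinAt
    · intro x hx
      rw [interior_Ici] at hx
      exact (lnK_hasDerivAt κ hκ0 (hxp0.trans hx)).differentiableAt.differentiableWithinAt
    · intro x hx
      rw [interior_Ici] at hx
      exact (lnK_deriv2 κ hκ0 (hxp0.trans hx)).differentiableAt.differentiableWithinAt
    · intro x hx
      rw [interior_Ici] at hx
      have hx0 : 0 < x := hxp0.trans hx
      rw [hderiv2 x hx0]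
      have hle : c ≤ x ^ (2 * κ) := by
        rw [← hxppow]
        exact Real.rpow_le_rpow hxp0.le hx.le (by positivity)
      rw [hc, div_le_iff₀ (by linarith)] at hle
      nlinarith [hident x hx0, Real.rpow_pos_of_pos hx0 (κ + 2)]
end

section
/- Fix κ > 0, μ ∈ ℝ and σ > 0, and let h_κ(x) := f_X(x)/(1 − F_X(x)) be the hazard function of the κ-lognormal distribution, where f_X(x) = (1/(2√(2π) σ)) · exp(−(ln_κ(x) − μ)²/(2σ²)) · (x^{κ−1} + x^{−κ−1}) is the κ-lognormal density and F_X(x) = Φ((ln_κ(x) − μ)/σ) with Φ the cumulative distribution function of the standard normal distribution. Then 4κσ² · h_κ(x)/x^{2κ−1} → 1 as x → +∞; in particular, h_κ is asymptotically decreasing for κ < 1/2, tends to the constant 1/(2σ²) for κ = 1/2, and is asymptotically increasing for κ > 1/2. -/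
open ProbabilityTheory

/-- `Φ`, the cumulative distribution function of the standard normal distribution. -/
noncomputable def stdGaussCDF (t : ℝ) : ℝ := ((gaussianReal 0 1) (Set.Iic t)).toReal

/-- The κ-lognormal probability density function. -/
noncomputable def kLNpdf (κ μ σ x : ℝ) : ℝ :=
  (1 / (2 * Real.sqrt (2 * Real.pi) * σ)) * Real.exp (-(lnK κ x - μ) ^ 2 / (2 * σ ^ 2)) *
    (x ^ (κ - 1) + x ^ (-κ - 1))

/-- The κ-lognormal cumulative distribution function `Φ((lnK κ x − μ)/σ)`. -/
noncomputable def kLNcdf (κ μ σ x : ℝ) : ℝ := stdGaussCDF ((lnK κ x - μ) / σ)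

/-- The κ-lognormal hazard function `h_κ(x) = f_X(x)/(1 − F_X(x))`. -/
noncomputable def hazardK (κ μ σ x : ℝ) : ℝ := kLNpdf κ μ σ x / (1 - kLNcdf κ μ σ x)

section MillsAux
open MeasureTheory Filter Set Real


noncomputable def phi (u : ℝ) : ℝ := Real.exp (-u ^ 2 / 2)

lemma phi_eq (u : ℝ) : phi u = Real.exp (-(1/2 : ℝ) * u ^ 2) := by
  unfold phi; ring_nf

lemma phi_integrable : MeasureTheory.Integrable phi := by
  have h := integrable_exp_neg_mul_sq (b := (1:ℝ)/2) (by norm_num)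
  exact h.congr (by filter_upwards with u; rw [phi_eq])

lemma phi_cont : Continuous phi := by
  unfold phi; fun_prop

lemma phi_pos (u : ℝ) : 0 < phi u := Real.exp_pos _

lemma exp_tendsto_zero : Tendsto phi atTop (nhds 0) := by
  have h1 : Tendsto (fun u : ℝ => -u ^ 2 / 2) atTop atBot := by
    have : Tendsto (fun u : ℝ => u ^ 2 / 2) atTop atTop :=
      (tendsto_pow_atTop (by norm_num)).atTop_div_const (by norm_num)
    have h2 := tendsto_neg_atTop_atBot.comp this
    simpa [Function.comp_def, neg_div] using h2
  exact Real.tendsto_exp_atBot.comp h1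

lemma hasDerivAt_negphi (u : ℝ) :
    HasDerivAt (fun u : ℝ => -phi u) (u * phi u) u := by
  have h1 : HasDerivAt (fun u : ℝ => -u ^ 2 / 2) (-u) u := by
    have := ((hasDerivAt_pow 2 u).neg).div_const 2
    norm_num at this
    exact this.congr_deriv (by ring)
  have h2 := h1.exp
  exact h2.neg.congr_deriv (by unfold phi; ring)

lemma integral_mul_phi {t : ℝ} (ht : 0 < t) :
    ∫ u in Ioi t, u * phi u = phi t := by
  have h := integral_Ioi_of_hasDerivAt_of_nonneg' (a := t)
    (g := fun u : ℝ => -phi u) (g' := fun u => u * phi u)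
    (fun x _ => hasDerivAt_negphi x)
    (fun x hx => mul_nonneg (le_of_lt (lt_trans ht hx)) (phi_pos x).le)
    (by simpa using exp_tendsto_zero.neg)
  simpa using h

lemma integrableOn_mul_phi {t : ℝ} (ht : 0 < t) :
    IntegrableOn (fun u => u * phi u) (Ioi t) := by
  exact integrableOn_Ioi_deriv_of_nonneg' (g := fun u : ℝ => -phi u)
    (fun x _ => hasDerivAt_negphi x)
    (fun x hx => mul_nonneg (le_of_lt (lt_trans ht hx)) (phi_pos x).le)
    (by simpa using exp_tendsto_zero.neg)

lemma mills_upper {t : ℝ} (ht : 0 < t) :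
    ∫ u in Ioi t, phi u ≤ phi t / t := by
  have h1 : ∫ u in Ioi t, phi u ≤ ∫ u in Ioi t, (1/t) * (u * phi u) := by
    refine setIntegral_mono_on phi_integrable.integrableOn
      ((integrableOn_mul_phi ht).const_mul _) measurableSet_Ioi ?_
    intro u hu
    have hu' : t < u := hu
    have : 1 ≤ u / t := (one_le_div ht).2 hu'.le
    calc phi u = 1 * phi u := by ring
    _ ≤ (u/t) * phi u := by nlinarith [phi_pos u]
    _ = 1/t * (u * phi u) := by ring
  rw [MeasureTheory.integral_const_mul, integral_mul_phi ht] at h1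
  rw [div_eq_inv_mul, ← one_div]; exact h1

noncomputable def millsG (u : ℝ) : ℝ := u / (u ^ 2 + 1) * phi u

lemma hasDerivAt_negG (u : ℝ) :
    HasDerivAt (fun u : ℝ => -millsG u) (phi u * (1 - 2 / (u ^ 2 + 1) ^ 2)) u := by
  have hne : u ^ 2 + 1 ≠ 0 := by positivity
  have h1 : HasDerivAt (fun u : ℝ => u ^ 2 + 1) (2 * u) u := by
    simpa using (hasDerivAt_pow 2 u).add_const 1
  have h2 : HasDerivAt (fun u : ℝ => u / (u ^ 2 + 1))
      ((1 * (u ^ 2 + 1) - u * (2 * u)) / (u ^ 2 + 1) ^ 2) u :=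
    (hasDerivAt_id u).div h1 hne
  have h3 : HasDerivAt (fun u : ℝ => -u ^ 2 / 2) (-u) u := by
    have := ((hasDerivAt_pow 2 u).neg).div_const 2
    norm_num at this
    exact this.congr_deriv (by ring)
  have h4 := h3.exp
  have h5 := (h2.mul h4).neg
  refine h5.congr_deriv (Eq.symm ?_)
  show phi u * (1 - 2 / (u ^ 2 + 1) ^ 2) =
    -((1 * (u ^ 2 + 1) - u * (2 * u)) / (u ^ 2 + 1) ^ 2 * Real.exp (-u ^ 2 / 2)
      + u / (u ^ 2 + 1) * (Real.exp (-u ^ 2 / 2) * -u))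
  unfold phi
  field_simp
  ring

lemma negG_deriv_le (u : ℝ) : phi u * (1 - 2 / (u ^ 2 + 1) ^ 2) ≤ phi u := by
  have h1 : (0:ℝ) < 2 / (u ^ 2 + 1) ^ 2 := by positivity
  nlinarith [phi_pos u]

lemma negG_deriv_abs (u : ℝ) : ‖phi u * (1 - 2 / (u ^ 2 + 1) ^ 2)‖ ≤ phi u := by
  rw [norm_mul, Real.norm_of_nonneg (phi_pos u).le]
  have h1 : (0:ℝ) < (u ^ 2 + 1) ^ 2 := by positivity
  have h2 : (2:ℝ) / (u ^ 2 + 1) ^ 2 ≤ 2 := by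
    rw [div_le_iff₀ h1]; nlinarith
  have h3 : ‖1 - 2 / (u ^ 2 + 1) ^ 2‖ ≤ 1 := by
    rw [Real.norm_eq_abs, abs_le]
    constructor <;> nlinarith [le_of_lt (show (0:ℝ) < 2 / (u^2+1)^2 by positivity)]
  nlinarith [phi_pos u, norm_nonneg (1 - 2 / (u ^ 2 + 1) ^ 2)]

lemma G_tendsto_zero : Tendsto millsG atTop (nhds 0) := by
  apply tendsto_of_tendsto_of_tendsto_of_le_of_le' tendsto_const_nhds exp_tendsto_zero
  · filter_upwards [eventually_ge_atTop (0:ℝ)] with u hu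
    unfold millsG
    have : 0 < u ^ 2 + 1 := by positivity
    have := phi_pos u
    positivity
  · filter_upwards with u
    unfold millsG
    have h1 : u / (u ^ 2 + 1) ≤ 1 := by
      rw [div_le_one (by positivity)]; nlinarith [sq_nonneg (u - 1)]
    nlinarith [phi_pos u, sq_nonneg (u-1), (show (0:ℝ) < u^2+1 by positivity)]

lemma negG_deriv_integrableOn (t : ℝ) :
    IntegrableOn (fun u => phi u * (1 - 2 / (u ^ 2 + 1) ^ 2)) (Ioi t) := by
  refine Integrable.mono' (g := phi) phi_integrable.integrableOn ?_ ?_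
  · apply Continuous.aestronglyMeasurable
    have hc : Continuous fun u : ℝ => (1 : ℝ) - 2 / (u ^ 2 + 1) ^ 2 :=
      continuous_const.sub (continuous_const.div (by fun_prop) (fun u => by positivity))
    exact phi_cont.mul hc
  · exact ae_of_all _ negG_deriv_abs

lemma mills_lower (t : ℝ) :
    t / (t ^ 2 + 1) * phi t ≤ ∫ u in Ioi t, phi u := by
  have h := integral_Ioi_of_hasDerivAt_of_tendsto' (a := t)
    (f := fun u : ℝ => -millsG u) (f' := fun u => phi u * (1 - 2 / (u ^ 2 + 1) ^ 2))
    (fun x _ => hasDerivAt_negG x) (negG_deriv_integrableOn t)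
    (by simpa using G_tendsto_zero.neg)
  have h2 : ∫ u in Ioi t, phi u * (1 - 2 / (u ^ 2 + 1) ^ 2) ≤ ∫ u in Ioi t, phi u :=
    setIntegral_mono (negG_deriv_integrableOn t) phi_integrable.integrableOn negG_deriv_le
  rw [h] at h2
  simpa [millsG] using h2

lemma mills_limit :
    Tendsto (fun t : ℝ => t * Real.exp (t ^ 2 / 2) * ∫ u in Ioi t, phi u) atTop (nhds 1) := by
  have hlow : Tendsto (fun t : ℝ => t ^ 2 / (t ^ 2 + 1)) atTop (nhds 1) := by
    have h0 : Tendsto (fun t : ℝ => (t ^ 2 + 1)⁻¹) atTop (nhds 0) :=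
      Tendsto.inv_tendsto_atTop (tendsto_atTop_add_const_right _ 1 (tendsto_pow_atTop (by norm_num)))
    have := tendsto_const_nhds (x := (1:ℝ)) (f := atTop (α := ℝ)) |>.sub h0
    rw [sub_zero] at this
    refine this.congr' ?_
    filter_upwards with t
    have : (t:ℝ) ^ 2 + 1 ≠ 0 := by positivity
    field_simp
    ring
  apply tendsto_of_tendsto_of_tendsto_of_le_of_le' hlow tendsto_const_nhds
  · filter_upwards [eventually_gt_atTop (0:ℝ)] with t ht
    have h1 := mills_lower t
    have hE : Real.exp (t ^ 2 / 2) * phi t = 1 := by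
      unfold phi; rw [← Real.exp_add, show t ^ 2 / 2 + -t ^ 2 / 2 = 0 by ring, Real.exp_zero]
    have h2 : t * Real.exp (t ^ 2 / 2) * (t / (t ^ 2 + 1) * phi t)
        = t ^ 2 / (t ^ 2 + 1) := by
      field_simp
      nlinarith [hE]
    rw [← h2]
    have hpos : 0 < t * Real.exp (t ^ 2 / 2) := by positivity
    nlinarith [h1]
  · filter_upwards [eventually_gt_atTop (0:ℝ)] with t ht
    have h1 := mills_upper ht
    have hE : Real.exp (t ^ 2 / 2) * phi t = 1 := by
      unfold phi; rw [← Real.exp_add, show t ^ 2 / 2 + -t ^ 2 / 2 = 0 by ring, Real.exp_zero]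
    have h2 : t * Real.exp (t ^ 2 / 2) * (phi t / t) = 1 := by
      field_simp
      nlinarith [hE]
    rw [← h2]
    have hpos : 0 < t * Real.exp (t ^ 2 / 2) := by positivity
    nlinarith [h1]



lemma gaussPDF_eq (x : ℝ) :
    gaussianPDFReal 0 1 x = (Real.sqrt (2 * Real.pi))⁻¹ * phi x := by
  unfold gaussianPDFReal phi
  norm_num

lemma tail_eq (t : ℝ) :
    1 - stdGaussCDF t = (Real.sqrt (2 * Real.pi))⁻¹ * ∫ u in Ioi t, phi u := by
  have hv : (1 : NNReal) ≠ 0 := one_ne_zero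
  have hint := integrable_gaussianPDFReal 0 1
  have hIic : stdGaussCDF t = ∫ x in Iic t, gaussianPDFReal 0 1 x := by
    unfold stdGaussCDF
    rw [gaussianReal_apply_eq_integral 0 hv, ENNReal.toReal_ofReal]
    exact setIntegral_nonneg measurableSet_Iic fun x _ => gaussianPDFReal_nonneg 0 1 x
  have hcompl : (Iic t)ᶜ = Ioi t := Set.compl_Iic
  have hsplit : (∫ x in Iic t, gaussianPDFReal 0 1 x) + ∫ x in Ioi t, gaussianPDFReal 0 1 x
      = 1 := by
    rw [← hcompl, integral_add_compl measurableSet_Iic hint,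
      integral_gaussianPDFReal_eq_one 0 hv]
  have hIoi : ∫ x in Ioi t, gaussianPDFReal 0 1 x
      = (Real.sqrt (2 * Real.pi))⁻¹ * ∫ u in Ioi t, phi u := by
    rw [← MeasureTheory.integral_const_mul]
    exact setIntegral_congr_fun measurableSet_Ioi fun x _ => gaussPDF_eq x
  rw [hIic, ← hIoi]
  linarith

lemma tail_pos (t : ℝ) : 0 < 1 - stdGaussCDF t := by
  rw [tail_eq]
  have h1 : 0 < ∫ u in Ioi t, phi u := by
    rcases le_or_gt t 0 with h | h
    · calc (0:ℝ) < 1 / (1 ^ 2 + 1) * phi 1 := mul_pos (by norm_num) (phi_pos 1)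
      _ ≤ ∫ u in Ioi (1:ℝ), phi u := mills_lower 1
      _ ≤ ∫ u in Ioi t, phi u := by
        apply setIntegral_mono_set phi_integrable.integrableOn
          (ae_of_all _ fun u => (phi_pos u).le)
        exact HasSubset.Subset.eventuallyLE (Set.Ioi_subset_Ioi (by linarith))
    · calc (0:ℝ) < t / (t ^ 2 + 1) * phi t := mul_pos (by positivity) (phi_pos t)
      _ ≤ ∫ u in Ioi t, phi u := mills_lower t
  positivity

end MillsAux

open Filter in
/-- Asymptotics of the κ-lognormal hazard function:
`4κσ² · h_κ(x) / x^(2κ−1) → 1` as `x → +∞`. -/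
theorem hazardK_asymptotic (κ μ σ : ℝ) (hκ : 0 < κ) (hσ : 0 < σ) :
    Filter.Tendsto (fun x : ℝ => 4 * κ * σ ^ 2 * hazardK κ μ σ x / x ^ (2 * κ - 1))
      Filter.atTop (nhds 1) := by
  have hs : 0 < Real.sqrt (2 * Real.pi) := Real.sqrt_pos.2 (by positivity)
  set s : ℝ := Real.sqrt (2 * Real.pi) with hs_def
  set g : ℝ → ℝ := fun x => (lnK κ x - μ) / σ with hg_def
  have hgtop : Tendsto g atTop atTop := by
    have h1 : Tendsto (fun x : ℝ => x ^ κ) atTop atTop := tendsto_rpow_atTop hκ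
    have h2 : Tendsto (fun x : ℝ => -(x ^ (-κ))) atTop (nhds (-0)) :=
      (tendsto_rpow_neg_atTop hκ).neg
    have h3 : Tendsto (fun x : ℝ => x ^ κ - x ^ (-κ)) atTop atTop := by
      have := h2.add_atTop h1
      refine this.congr fun x => by ring
    have h4 : Tendsto (fun x : ℝ => lnK κ x) atTop atTop := by
      have := h3.atTop_div_const (by positivity : (0:ℝ) < 2 * κ)
      exact this.congr fun x => rfl
    have h5 : Tendsto (fun x : ℝ => lnK κ x - μ) atTop atTop :=
      tendsto_atTop_add_const_right _ (-μ) h4 |>.congr fun x => by ring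
    exact h5.atTop_div_const hσ
  have hM : Tendsto (fun t : ℝ => s * t * Real.exp (t ^ 2 / 2) * (1 - stdGaussCDF t))
      atTop (nhds 1) := by
    refine mills_limit.congr fun t => ?_
    rw [tail_eq t, show s * t * Real.exp (t ^ 2 / 2) * (s⁻¹ * ∫ u in Set.Ioi t, phi u)
      = (s * s⁻¹) * (t * Real.exp (t ^ 2 / 2) * ∫ u in Set.Ioi t, phi u) by ring,
      mul_inv_cancel₀ (ne_of_gt hs), one_mul]
  have hMg : Tendsto (fun x : ℝ =>
      s * g x * Real.exp ((g x) ^ 2 / 2) * (1 - stdGaussCDF (g x))) atTop (nhds 1) :=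
    hM.comp hgtop
  have hN : Tendsto (fun x : ℝ =>
      1 - (x ^ (-κ)) ^ 4 - 2 * κ * μ * (x ^ (-κ) + (x ^ (-κ)) ^ 3)) atTop (nhds 1) := by
    have hb : Tendsto (fun x : ℝ => x ^ (-κ)) atTop (nhds 0) := tendsto_rpow_neg_atTop hκ
    have h := (tendsto_const_nhds (x := (1:ℝ)).sub ((hb.pow 4))).sub
      ((tendsto_const_nhds (x := 2*κ*μ)).mul (hb.add (hb.pow 3)))
    simpa using h
  have key : Tendsto (fun x : ℝ =>
      (1 - (x ^ (-κ)) ^ 4 - 2 * κ * μ * (x ^ (-κ) + (x ^ (-κ)) ^ 3)) /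
        (s * g x * Real.exp ((g x) ^ 2 / 2) * (1 - stdGaussCDF (g x)))) atTop (nhds 1) := by
    simpa [Pi.div_def] using hN.div hMg one_ne_zero
  refine key.congr' ?_
  filter_upwards [eventually_gt_atTop (0:ℝ), hgtop.eventually (eventually_gt_atTop (0:ℝ))]
    with x hx hgx
  have hT : 0 < 1 - stdGaussCDF (g x) := tail_pos (g x)
  have hE : 0 < Real.exp ((g x) ^ 2 / 2) := Real.exp_pos _
  set E : ℝ := Real.exp ((g x) ^ 2 / 2) with hE_def
  set T : ℝ := 1 - stdGaussCDF (g x) with hT_def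
  have ha : 0 < x ^ κ := Real.rpow_pos_of_pos hx _
  have hb0 : 0 < x ^ (-κ) := Real.rpow_pos_of_pos hx _
  set a : ℝ := x ^ κ with ha_def
  set b : ℝ := x ^ (-κ) with hb_def
  have hab : a * b = 1 := by
    rw [ha_def, hb_def, ← Real.rpow_add hx]
    simp
  have hx1 : x ^ (κ - 1) = a / x := by
    rw [ha_def, Real.rpow_sub hx, Real.rpow_one]
  have hx2 : x ^ (-κ - 1) = b / x := by
    rw [hb_def, Real.rpow_sub hx, Real.rpow_one]
  have hx3 : x ^ (2 * κ - 1) = a * a / x := by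
    rw [Real.rpow_sub hx, Real.rpow_one, show (2:ℝ) * κ = κ + κ by ring,
      Real.rpow_add hx, ha_def]
  have hgval : σ * g x = lnK κ x - μ := by
    rw [hg_def]
    field_simp
  have hlnk : 2 * κ * (σ * g x) = a - b - 2 * κ * μ := by
    rw [hgval, lnK, ha_def, hb_def]
    field_simp
  have hexp : Real.exp (-(lnK κ x - μ) ^ 2 / (2 * σ ^ 2)) = E⁻¹ := by
    rw [hE_def, ← Real.exp_neg]
    congr 1
    rw [← hgval]
    field_simp
  unfold hazardK kLNpdf kLNcdf
  rw [hexp, hx1, hx2, hx3]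
  have hMne : s * g x * E * T ≠ 0 := by positivity
  have hXne : s * E * T * (a * a) ≠ 0 := by positivity
  have hLHS : (1 - b ^ 4 - 2 * κ * μ * (b + b ^ 3)) / (s * g x * E * T)
      = (2 * κ * σ * (a + b)) / (s * E * T * (a * a)) := by
    rw [div_eq_div_iff hMne hXne]
    linear_combination (s * E * T * (-(b^2*(a*b+1) + 2*κ*μ*(a + b*(a*b+1))))) * hab
      + (s * E * T * (-(a+b))) * hlnk
  have hRHS : 4 * κ * σ ^ 2 * (1 / (2 * s * σ) * E⁻¹ * (a / x + b / x) /
      (1 - stdGaussCDF ((lnK κ x - μ) / σ))) / (a * a / x)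
      = (2 * κ * σ * (a + b)) / (s * E * T * (a * a)) := by
    have hTg : 1 - stdGaussCDF ((lnK κ x - μ) / σ) = T := by rw [hT_def, hg_def]
    rw [hTg]
    have hxne : x ≠ 0 := ne_of_gt hx
    field_simp
    ring
  rw [hLHS, hRHS]
end

section
/- Fix κ' > 0 and κ > 0 and ℓ > 0 with κ' = κ/ℓ. Then for all y ≥ 0: (2κy)^{1/κ'} ≤ exp_{κ'}(ℓy) ≤ 2^{1/κ'}·(1 + κ²y²)^{1/(2κ')}, and for all y < 0: exp(ℓy) ≤ exp_{κ'}(ℓy) ≤ 1. -/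
lemma sqrt_add_le_exp {s : ℝ} (hs : 0 ≤ s) :
    Real.sqrt (1 + s ^ 2) + s ≤ Real.exp s := by
  have h1 : Real.sqrt (1 + s ^ 2) ≤ 1 + s ^ 2 / 2 := by
    rw [show (1 : ℝ) + s ^ 2 / 2 = Real.sqrt ((1 + s ^ 2 / 2) ^ 2) by
      rw [Real.sqrt_sq (by positivity)]]
    exact Real.sqrt_le_sqrt (by nlinarith)
  have h2 := Real.quadratic_le_exp_of_nonneg hs
  linarith

/-- Bounds for the κ-exponential with `κ' = κ/ℓ`:
for `y ≥ 0`, `(2κy)^(1/κ') ≤ expK κ' (ℓy) ≤ 2^(1/κ')·(1 + κ²y²)^(1/(2κ'))`;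
for `y < 0`, `exp(ℓy) ≤ expK κ' (ℓy) ≤ 1`. -/
theorem expK_bounds (κ' κ ℓ : ℝ) (hκ' : 0 < κ') (hκ : 0 < κ) (hℓ : 0 < ℓ)
    (h : κ' = κ / ℓ) :
    (∀ y : ℝ, 0 ≤ y →
      (2 * κ * y) ^ (1 / κ') ≤ expK κ' (ℓ * y) ∧
      expK κ' (ℓ * y) ≤ 2 ^ (1 / κ') * (1 + κ ^ 2 * y ^ 2) ^ (1 / (2 * κ'))) ∧
    (∀ y : ℝ, y < 0 →
      Real.exp (ℓ * y) ≤ expK κ' (ℓ * y) ∧ expK κ' (ℓ * y) ≤ 1) := by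
  have hκℓ : κ' * ℓ = κ := by rw [h]; field_simp
  have hbase : ∀ y : ℝ, expK κ' (ℓ * y)
      = (Real.sqrt (1 + κ ^ 2 * y ^ 2) + κ * y) ^ (1 / κ') := by
    intro y
    unfold expK
    have h1 : κ' ^ 2 * (ℓ * y) ^ 2 = κ ^ 2 * y ^ 2 := by
      rw [← hκℓ]; ring
    have h2 : κ' * (ℓ * y) = κ * y := by rw [← hκℓ]; ring
    rw [h1, h2]
  have hexp : (0 : ℝ) ≤ 1 / κ' := by positivity
  constructor
  · intro y hy
    rw [hbase]
    set A : ℝ := 1 + κ ^ 2 * y ^ 2 with hA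
    have hA0 : (0 : ℝ) ≤ A := by positivity
    have hky : κ * y ≤ Real.sqrt A := by
      rw [show κ * y = Real.sqrt ((κ * y) ^ 2) by
        rw [Real.sqrt_sq (by positivity)]]
      exact Real.sqrt_le_sqrt (by nlinarith)
    constructor
    · apply Real.rpow_le_rpow (by positivity) _ hexp
      have hky0 : 0 ≤ κ * y := by positivity
      linarith
    · have hle : Real.sqrt A + κ * y ≤ 2 * Real.sqrt A := by linarith
      calc (Real.sqrt A + κ * y) ^ (1 / κ')
          ≤ (2 * Real.sqrt A) ^ (1 / κ') := by
            apply Real.rpow_le_rpow _ hle hexp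
            have := Real.sqrt_nonneg A
            have hky0 : 0 ≤ κ * y := by positivity
            linarith
        _ = 2 ^ (1 / κ') * A ^ (1 / (2 * κ')) := by
            rw [Real.mul_rpow (by norm_num) (Real.sqrt_nonneg A),
              Real.sqrt_eq_rpow, ← Real.rpow_mul hA0]
            congr 2
            field_simp
  · intro y hy
    rw [hbase]
    set t : ℝ := κ * y with ht
    have htneg : t < 0 := mul_neg_of_pos_of_neg hκ hy
    have hAt : 1 + κ ^ 2 * y ^ 2 = 1 + t ^ 2 := by rw [ht]; ring
    rw [hAt]
    have hs : (0 : ℝ) ≤ -t := by linarith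
    have hsq : Real.sqrt (1 + t ^ 2) = Real.sqrt (1 + (-t) ^ 2) := by ring_nf
    have habs : -t ≤ Real.sqrt (1 + t ^ 2) :=
      Real.le_sqrt_of_sq_le (by nlinarith)
    have hbpos : 0 < Real.sqrt (1 + t ^ 2) + t := by
      have : -t < Real.sqrt (1 + t ^ 2) :=
        Real.lt_sqrt_of_sq_lt (by nlinarith)
      linarith
    constructor
    · -- exp (ℓ y) ≤ base ^ (1/κ')
      have hkey : Real.exp t ≤ Real.sqrt (1 + t ^ 2) + t := by
        have hk := sqrt_add_le_exp hs
        rw [← hsq] at hk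
        -- hk : sqrt(1+t²) - t ≤ exp (-t)
        have hexppos := Real.exp_pos (-t)
        have hprod : (Real.sqrt (1 + t ^ 2) - t) * (Real.sqrt (1 + t ^ 2) + t) = 1 := by
          have : Real.sqrt (1 + t ^ 2) ^ 2 = 1 + t ^ 2 :=
            Real.sq_sqrt (by positivity)
          nlinarith
        have h2 : Real.exp t = (Real.exp (-t))⁻¹ := by
          rw [← Real.exp_neg]; ring_nf
        rw [h2]
        rw [inv_le_iff_one_le_mul₀ hexppos]
        calc (1 : ℝ) = (Real.sqrt (1 + t ^ 2) - t) * (Real.sqrt (1 + t ^ 2) + t) := hprod.symm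
          _ ≤ Real.exp (-t) * (Real.sqrt (1 + t ^ 2) + t) := by
              apply mul_le_mul_of_nonneg_right _ hbpos.le
              linarith
          _ = (Real.sqrt (1 + t ^ 2) + t) * Real.exp (-t) := mul_comm _ _
      have hly : ℓ * y = t * (1 / κ') := by
        rw [ht, ← hκℓ]; field_simp
      rw [hly, Real.exp_mul]
      exact Real.rpow_le_rpow (Real.exp_pos t).le hkey hexp
    · apply Real.rpow_le_one hbpos.le _ hexp
      have : Real.sqrt (1 + t ^ 2) ≤ 1 - t := by
        rw [show (1 : ℝ) - t = Real.sqrt ((1 - t) ^ 2) by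
          rw [Real.sqrt_sq (by linarith)]]
        exact Real.sqrt_le_sqrt (by nlinarith)
      linarith
end

section
/- Fix κ > 0, μ ∈ ℝ, σ > 0 and a positive integer ℓ, and let γ denote the real Gaussian measure with mean μ and variance σ². Let n* := ⌈ℓ/(2κ)⌉. Then the ℓ-th κ-lognormal moment m := ∫ exp_{κ/ℓ}(ℓy) dγ(y) satisfies the two-sided bound: ∫_{(0,∞)} (2κy)^{ℓ/κ} dγ(y) + ∫_{(−∞,0)} e^{ℓy} dγ(y) ≤ m ≤ ∫_{(0,∞)} 2^{ℓ/κ}·(1 + κ²y²)^{n*} dγ(y) + γ((−∞, 0]). Moreover, the Gaussian exponential tail term evaluates in closed form as ∫_{(−∞,0)} e^{ℓy} dγ(y) = e^{ℓμ + ℓ²σ²/2} · γ_{μ+ℓσ²,σ}((−∞,0)), where γ_{μ+ℓσ²,σ} is the Gaussian measure with mean μ + ℓσ² and variance σ². -/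
open MeasureTheory ProbabilityTheory

open Real
open scoped NNReal ENNReal

-- key scalar inequality: exp t ≤ √(1+t²)+t for t ≤ 0
lemma exp_le_sqrt_add {t : ℝ} (ht : t ≤ 0) : Real.exp t ≤ Real.sqrt (1 + t ^ 2) + t := by
  set s := -t with hs
  have hs0 : 0 ≤ s := by simp [hs]; linarith
  have hq : 1 + s + s ^ 2 / 2 ≤ Real.exp s := Real.quadratic_le_exp_of_nonneg hs0
  have hsqrt : Real.sqrt (1 + s ^ 2) ≤ 1 + s ^ 2 / 2 := by
    rw [show (1 : ℝ) + s ^ 2 / 2 = Real.sqrt ((1 + s ^ 2 / 2) ^ 2) from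
      (Real.sqrt_sq (by positivity)).symm]
    exact Real.sqrt_le_sqrt (by nlinarith)
  have hkey : Real.sqrt (1 + s ^ 2) + s ≤ Real.exp s := by linarith
  have hpos : 0 < Real.sqrt (1 + s ^ 2) + s := by positivity
  have hprod : (Real.sqrt (1 + s ^ 2) - s) * (Real.sqrt (1 + s ^ 2) + s) = 1 := by
    have : Real.sqrt (1 + s ^ 2) ^ 2 = 1 + s ^ 2 := Real.sq_sqrt (by positivity)
    nlinarith
  have h1 : Real.exp t = (Real.exp s)⁻¹ := by rw [hs, Real.exp_neg]; simp
  have h2 : Real.sqrt (1 + t ^ 2) + t = (Real.sqrt (1 + s ^ 2) + s)⁻¹ := by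
    have ht2 : t ^ 2 = s ^ 2 := by rw [hs]; ring
    rw [ht2]
    have hts : Real.sqrt (1 + s ^ 2) + t = Real.sqrt (1 + s ^ 2) - s := by rw [hs]; ring
    rw [hts]
    exact eq_inv_of_mul_eq_one_left hprod
  rw [h1, h2]
  exact inv_anti₀ hpos hkey

lemma int_poly_gauss {b : ℝ} (hb : 0 < b) (n : ℕ) (κ μ : ℝ) :
    Integrable (fun x : ℝ => (1 + κ ^ 2 * x ^ 2) ^ n * Real.exp (-b * (x - μ) ^ 2)) := by
  have hH : Integrable (fun z : ℝ => (1 + κ ^ 2 * (z + μ) ^ 2) ^ n * Real.exp (-b * z ^ 2)) := by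
    set C : ℝ := 1 + 2 * κ ^ 2 + 2 * κ ^ 2 * μ ^ 2 with hC
    have hC1 : (1 : ℝ) ≤ C := by nlinarith [sq_nonneg κ, sq_nonneg (κ * μ)]
    have int1 : Integrable (fun z : ℝ => Real.exp (-b * z ^ 2)) := integrable_exp_neg_mul_sq hb
    have int2 : Integrable (fun z : ℝ => (z ^ 2) ^ n * Real.exp (-b * z ^ 2)) := by
      have h := integrable_rpow_mul_exp_neg_mul_sq hb
        (s := ((2 * n : ℕ) : ℝ)) (lt_of_lt_of_le neg_one_lt_zero (Nat.cast_nonneg _))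
      refine h.congr (Filter.Eventually.of_forall fun z => ?_)
      simp only [Real.rpow_natCast]
      congr 1
      rw [show (2 * n) = n * 2 by ring, pow_mul, ← pow_mul, ← pow_mul, Nat.mul_comm]
    refine ((int1.const_mul ((2 * C) ^ n)).add (int2.const_mul ((2 * C) ^ n))).mono'
      ?_ (Filter.Eventually.of_forall fun z => ?_)
    · apply Continuous.aestronglyMeasurable
      fun_prop
    · have he : (0 : ℝ) < Real.exp (-b * z ^ 2) := Real.exp_pos _
      have hA : 1 + κ ^ 2 * (z + μ) ^ 2 ≤ C * (1 + z ^ 2) := by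
        nlinarith [sq_nonneg (κ * (z - μ)), sq_nonneg z, sq_nonneg (κ * μ * z)]
      have hB : (1 + κ ^ 2 * (z + μ) ^ 2) ^ n ≤ C ^ n * (1 + z ^ 2) ^ n :=
        (pow_le_pow_left₀ (by positivity) hA n).trans_eq (mul_pow C _ n)
      have hD : (1 + z ^ 2) ^ n ≤ 2 ^ n * (1 + (z ^ 2) ^ n) := by
        have h1 : (1 + z ^ 2) ^ n ≤ (2 * max 1 (z ^ 2)) ^ n := by
          refine pow_le_pow_left₀ (by positivity) ?_ n
          have := le_max_left 1 (z ^ 2)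
          have := le_max_right 1 (z ^ 2)
          linarith
        have h2 : (max 1 (z ^ 2)) ^ n ≤ 1 + (z ^ 2) ^ n := by
          rcases le_total (1 : ℝ) (z ^ 2) with h | h
          · rw [max_eq_right h]
            nlinarith [pow_nonneg (sq_nonneg z) n]
          · rw [max_eq_left h]
            simp [one_pow]
            positivity
        calc (1 + z ^ 2) ^ n ≤ (2 * max 1 (z ^ 2)) ^ n := h1
          _ = 2 ^ n * (max 1 (z ^ 2)) ^ n := by rw [mul_pow]
          _ ≤ 2 ^ n * (1 + (z ^ 2) ^ n) := by
              exact mul_le_mul_of_nonneg_left h2 (by positivity)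
      rw [Real.norm_eq_abs, abs_of_nonneg (by positivity)]
      have : (1 + κ ^ 2 * (z + μ) ^ 2) ^ n ≤ (2 * C) ^ n * (1 + (z ^ 2) ^ n) := by
        calc (1 + κ ^ 2 * (z + μ) ^ 2) ^ n ≤ C ^ n * (1 + z ^ 2) ^ n := hB
          _ ≤ C ^ n * (2 ^ n * (1 + (z ^ 2) ^ n)) :=
              mul_le_mul_of_nonneg_left hD (by positivity)
          _ = (2 * C) ^ n * (1 + (z ^ 2) ^ n) := by rw [mul_pow]; ring
      calc (1 + κ ^ 2 * (z + μ) ^ 2) ^ n * Real.exp (-b * z ^ 2)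
          ≤ ((2 * C) ^ n * (1 + (z ^ 2) ^ n)) * Real.exp (-b * z ^ 2) :=
            mul_le_mul_of_nonneg_right this he.le
        _ = (2 * C) ^ n * Real.exp (-b * z ^ 2)
            + (2 * C) ^ n * ((z ^ 2) ^ n * Real.exp (-b * z ^ 2)) := by ring
  have h2 := hH.comp_sub_right μ
  refine h2.congr (Filter.Eventually.of_forall fun x => ?_)
  simp [sub_add_cancel]

lemma gaussian_integrable_iff {μ : ℝ} {v : ℝ≥0} (hv : v ≠ 0) {g : ℝ → ℝ} :
    Integrable g (gaussianReal μ v) ↔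
      Integrable (fun x => g x * gaussianPDFReal μ v x) volume := by
  rw [gaussianReal_of_var_ne_zero _ hv, integrable_withDensity_iff (measurable_gaussianPDF μ v)
    (Filter.Eventually.of_forall fun _ => ENNReal.ofReal_lt_top)]
  refine integrable_congr (Filter.Eventually.of_forall fun x => ?_)
  simp only [gaussianPDF_def, ENNReal.toReal_ofReal (gaussianPDFReal_nonneg _ _ _)]

lemma gaussian_setIntegral {μ : ℝ} {v : ℝ≥0} (hv : v ≠ 0) (g : ℝ → ℝ) {s : Set ℝ}
    (hs : MeasurableSet s) :
    ∫ y in s, g y ∂(gaussianReal μ v) = ∫ y in s, gaussianPDFReal μ v y * g y := by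
  rw [gaussianReal_of_var_ne_zero _ hv]
  have : (gaussianPDF μ v) = fun x => ((gaussianPDFReal μ v x).toNNReal : ℝ≥0∞) := by
    funext x; rfl
  rw [this, setIntegral_withDensity_eq_setIntegral_smul
    (by exact (measurable_gaussianPDFReal μ v).real_toNNReal) g hs]
  refine setIntegral_congr_fun hs fun x _ => ?_
  simp only [NNReal.smul_def, smul_eq_mul]
  rw [Real.coe_toNNReal _ (gaussianPDFReal_nonneg _ _ _)]

lemma gauss_tilt (μ σ : ℝ) (hσ : 0 < σ) (ℓ : ℕ) :
    ∫ y in Set.Iio (0:ℝ), Real.exp (ℓ * y) ∂(gaussianReal μ ⟨σ ^ 2, sq_nonneg σ⟩)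
      = Real.exp (ℓ * μ + ℓ ^ 2 * σ ^ 2 / 2)
        * ((gaussianReal (μ + ℓ * σ ^ 2) ⟨σ ^ 2, sq_nonneg σ⟩) (Set.Iio 0)).toReal := by
  set v : ℝ≥0 := ⟨σ ^ 2, sq_nonneg σ⟩ with hvdef
  have hvcoe : (v : ℝ) = σ ^ 2 := rfl
  have hv : v ≠ 0 := by
    intro h
    have : (v : ℝ) = 0 := by rw [h]; rfl
    rw [hvcoe] at this
    exact (pow_ne_zero 2 hσ.ne') this
  rw [gaussian_setIntegral hv _ measurableSet_Iio,
    gaussianReal_apply_eq_integral _ hv (Set.Iio 0),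
    ENNReal.toReal_ofReal (setIntegral_nonneg measurableSet_Iio
      fun x _ => gaussianPDFReal_nonneg _ _ _),
    ← integral_const_mul]
  refine setIntegral_congr_fun measurableSet_Iio fun y _ => ?_
  simp only [gaussianPDFReal]
  have hexp : Real.exp (-(y - μ) ^ 2 / (2 * (v : ℝ))) * Real.exp (ℓ * y)
      = Real.exp (ℓ * μ + ℓ ^ 2 * σ ^ 2 / 2)
        * Real.exp (-(y - (μ + ℓ * σ ^ 2)) ^ 2 / (2 * (v : ℝ))) := by
    rw [← Real.exp_add, ← Real.exp_add]
    congr 1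
    rw [hvcoe]
    have hσ2 : σ ^ 2 ≠ 0 := pow_ne_zero 2 hσ.ne'
    field_simp
    ring
  calc (Real.sqrt (2 * π * v))⁻¹ * Real.exp (-(y - μ) ^ 2 / (2 * (v : ℝ))) * Real.exp (ℓ * y)
      = (Real.sqrt (2 * π * v))⁻¹
        * (Real.exp (-(y - μ) ^ 2 / (2 * (v : ℝ))) * Real.exp (ℓ * y)) := by ring
    _ = (Real.sqrt (2 * π * v))⁻¹ * (Real.exp (ℓ * μ + ℓ ^ 2 * σ ^ 2 / 2)
        * Real.exp (-(y - (μ + ℓ * σ ^ 2)) ^ 2 / (2 * (v : ℝ)))) := by rw [hexp]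
    _ = Real.exp (ℓ * μ + ℓ ^ 2 * σ ^ 2 / 2) * ((Real.sqrt (2 * π * v))⁻¹
        * Real.exp (-(y - (μ + ℓ * σ ^ 2)) ^ 2 / (2 * (v : ℝ)))) := by ring

lemma sqrt_ge_abs (κ y : ℝ) : |κ * y| ≤ Real.sqrt (1 + κ ^ 2 * y ^ 2) := by
  rw [← Real.sqrt_sq_eq_abs]
  exact Real.sqrt_le_sqrt (by nlinarith)

lemma g_pos (κ y : ℝ) : 0 < Real.sqrt (1 + κ ^ 2 * y ^ 2) + κ * y := by
  have h1 : Real.sqrt ((κ * y) ^ 2) < Real.sqrt (1 + κ ^ 2 * y ^ 2) :=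
    Real.sqrt_lt_sqrt (sq_nonneg _) (by nlinarith)
  rw [Real.sqrt_sq_eq_abs] at h1
  have := neg_abs_le (κ * y)
  linarith

/-- Two-sided bounds for the `ℓ`-th κ-lognormal moment `m = ∫ expK_{κ/ℓ}(ℓy) dγ(y)`
(`γ` Gaussian with mean `μ` and variance `σ²`, `n* = ⌈ℓ/(2κ)⌉`):
`∫_{(0,∞)} (2κy)^{ℓ/κ} dγ + ∫_{(-∞,0)} e^{ℓy} dγ ≤ m
  ≤ ∫_{(0,∞)} 2^{ℓ/κ}(1+κ²y²)^{n*} dγ + γ((-∞,0])`;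
moreover `∫_{(-∞,0)} e^{ℓy} dγ = e^{ℓμ + ℓ²σ²/2} · γ_{μ+ℓσ²,σ}((-∞,0))`. -/
theorem kLN_moment_bounds (κ μ σ : ℝ) (hκ : 0 < κ) (hσ : 0 < σ) (ℓ : ℕ) (hℓ : 0 < ℓ)
    (γ : Measure ℝ) (hγ : γ = gaussianReal μ ⟨σ ^ 2, sq_nonneg σ⟩) :
    (∫ y in Set.Ioi (0 : ℝ), (2 * κ * y) ^ ((ℓ : ℝ) / κ) ∂γ
        + ∫ y in Set.Iio (0 : ℝ), Real.exp (ℓ * y) ∂γ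
      ≤ ∫ y, expK (κ / ℓ) (ℓ * y) ∂γ) ∧
    (∫ y, expK (κ / ℓ) (ℓ * y) ∂γ
      ≤ (∫ y in Set.Ioi (0 : ℝ),
            (2 : ℝ) ^ ((ℓ : ℝ) / κ) * (1 + κ ^ 2 * y ^ 2) ^ (⌈(ℓ : ℝ) / (2 * κ)⌉₊) ∂γ)
        + (γ (Set.Iic 0)).toReal) ∧
    (∫ y in Set.Iio (0 : ℝ), Real.exp (ℓ * y) ∂γ
      = Real.exp (ℓ * μ + ℓ ^ 2 * σ ^ 2 / 2)
        * ((gaussianReal (μ + ℓ * σ ^ 2) ⟨σ ^ 2, sq_nonneg σ⟩) (Set.Iio 0)).toReal) := by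
  subst hγ
  set v : ℝ≥0 := ⟨σ ^ 2, sq_nonneg σ⟩ with hvdef
  have hvcoe : (v : ℝ) = σ ^ 2 := rfl
  have hv : v ≠ 0 := by
    intro h
    have h2 : (v : ℝ) = 0 := by rw [h]; rfl
    rw [hvcoe] at h2
    exact (pow_ne_zero 2 hσ.ne') h2
  have hℓR : (0 : ℝ) < ℓ := by exact_mod_cast hℓ
  set p : ℝ := (ℓ : ℝ) / κ with hpdef
  have hp0 : 0 < p := div_pos hℓR hκ
  set n : ℕ := ⌈(ℓ : ℝ) / (2 * κ)⌉₊ with hndef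
  have hn2 : p / 2 ≤ (n : ℝ) := by
    have h := Nat.le_ceil ((ℓ : ℝ) / (2 * κ))
    have : p / 2 = (ℓ : ℝ) / (2 * κ) := by rw [hpdef]; ring
    rw [this]
    exact h
  -- rewrite expK
  have hfeq : (fun y : ℝ => expK (κ / ℓ) (ℓ * y))
      = fun y => (Real.sqrt (1 + κ ^ 2 * y ^ 2) + κ * y) ^ p := by
    funext y
    unfold expK
    rw [show (κ / (ℓ : ℝ)) ^ 2 * ((ℓ : ℝ) * y) ^ 2 = κ ^ 2 * y ^ 2 by
        field_simp, 
      show κ / (ℓ : ℝ) * ((ℓ : ℝ) * y) = κ * y by field_simp,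
      show 1 / (κ / (ℓ : ℝ)) = p by rw [hpdef, one_div_div]]
  rw [hfeq]
  -- global upper bound
  have hX1 : ∀ y : ℝ, (1 : ℝ) ≤ 1 + κ ^ 2 * y ^ 2 := fun y => by nlinarith [sq_nonneg (κ * y)]
  have hub : ∀ y : ℝ, (Real.sqrt (1 + κ ^ 2 * y ^ 2) + κ * y) ^ p
      ≤ 2 ^ p * (1 + κ ^ 2 * y ^ 2) ^ n := by
    intro y
    set X : ℝ := 1 + κ ^ 2 * y ^ 2 with hXdef
    have hX0 : (0 : ℝ) ≤ X := le_trans zero_le_one (hX1 y)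
    have h1 : Real.sqrt X + κ * y ≤ 2 * Real.sqrt X := by
      have := sqrt_ge_abs κ y
      have := le_abs_self (κ * y)
      linarith
    calc (Real.sqrt X + κ * y) ^ p ≤ (2 * Real.sqrt X) ^ p :=
          Real.rpow_le_rpow (g_pos κ y).le h1 hp0.le
      _ = 2 ^ p * (Real.sqrt X) ^ p := Real.mul_rpow (by norm_num) (Real.sqrt_nonneg _)
      _ = 2 ^ p * X ^ (p / 2) := by
          rw [Real.sqrt_eq_rpow, ← Real.rpow_mul hX0]
          ring_nf
      _ ≤ 2 ^ p * X ^ ((n : ℕ) : ℝ) := by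
          refine mul_le_mul_of_nonneg_left ?_ (by positivity)
          exact Real.rpow_le_rpow_of_exponent_le (hX1 y) hn2
      _ = 2 ^ p * X ^ n := by rw [Real.rpow_natCast]
  -- lower bounds pointwise
  have hlow_pos : ∀ y : ℝ, 0 ≤ y → (2 * κ * y) ^ p
      ≤ (Real.sqrt (1 + κ ^ 2 * y ^ 2) + κ * y) ^ p := by
    intro y hy
    refine Real.rpow_le_rpow (by positivity) ?_ hp0.le
    have h := sqrt_ge_abs κ y
    rw [abs_of_nonneg (by positivity)] at h
    linarith
  have hlow_neg : ∀ y : ℝ, y ≤ 0 → Real.exp (ℓ * y)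
      ≤ (Real.sqrt (1 + κ ^ 2 * y ^ 2) + κ * y) ^ p := by
    intro y hy
    have h1 : Real.exp (κ * y) ≤ Real.sqrt (1 + (κ * y) ^ 2) + κ * y :=
      exp_le_sqrt_add (mul_nonpos_of_nonneg_of_nonpos hκ.le hy)
    rw [mul_pow] at h1
    have h2 : Real.exp (ℓ * y) = Real.exp (κ * y) ^ p := by
      rw [← Real.exp_mul]
      congr 1
      rw [hpdef]
      field_simp
    rw [h2]
    exact Real.rpow_le_rpow (Real.exp_pos _).le h1 hp0.le
  -- f ≤ 1 on nonpositive reals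
  have hle_one : ∀ y : ℝ, y ≤ 0 → (Real.sqrt (1 + κ ^ 2 * y ^ 2) + κ * y) ^ p ≤ 1 := by
    intro y hy
    refine Real.rpow_le_one (g_pos κ y).le ?_ hp0.le
    have h1 : Real.sqrt (1 + κ ^ 2 * y ^ 2) ≤ 1 - κ * y := by
      rw [show (1 : ℝ) - κ * y = Real.sqrt ((1 - κ * y) ^ 2) from
        (Real.sqrt_sq (by nlinarith)).symm]
      refine Real.sqrt_le_sqrt ?_
      nlinarith [mul_nonpos_of_nonneg_of_nonpos hκ.le hy]
    linarith
  -- integrability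
  have hB_int : Integrable (fun y : ℝ => (2 : ℝ) ^ p * (1 + κ ^ 2 * y ^ 2) ^ n)
      (gaussianReal μ v) := by
    refine Integrable.const_mul ?_ _
    rw [gaussian_integrable_iff hv]
    have hb : 0 < (2 * (v : ℝ))⁻¹ := by rw [hvcoe]; positivity
    have hcore := (int_poly_gauss hb n κ μ).const_mul ((Real.sqrt (2 * π * (v : ℝ)))⁻¹)
    refine hcore.congr (Filter.Eventually.of_forall fun x => ?_)
    simp only [gaussianPDFReal]
    rw [show -(2 * (v : ℝ))⁻¹ * (x - μ) ^ 2 = -(x - μ) ^ 2 / (2 * (v : ℝ)) by ring]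
    ring
  have hcont : Continuous (fun y : ℝ => (Real.sqrt (1 + κ ^ 2 * y ^ 2) + κ * y) ^ p) := by
    refine Continuous.rpow_const ?_ (fun x => Or.inr hp0.le)
    fun_prop
  have hF_int : Integrable (fun y : ℝ => (Real.sqrt (1 + κ ^ 2 * y ^ 2) + κ * y) ^ p)
      (gaussianReal μ v) := by
    refine hB_int.mono' hcont.aestronglyMeasurable (Filter.Eventually.of_forall fun y => ?_)
    rw [Real.norm_eq_abs, abs_of_nonneg (Real.rpow_nonneg (g_pos κ y).le _)]
    exact hub y
  have hsplit : ∫ y, (Real.sqrt (1 + κ ^ 2 * y ^ 2) + κ * y) ^ p ∂(gaussianReal μ v)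
      = (∫ y in Set.Ioi (0 : ℝ), (Real.sqrt (1 + κ ^ 2 * y ^ 2) + κ * y) ^ p ∂(gaussianReal μ v))
        + ∫ y in Set.Iic (0 : ℝ), (Real.sqrt (1 + κ ^ 2 * y ^ 2) + κ * y) ^ p
            ∂(gaussianReal μ v) := by
    rw [← integral_add_compl measurableSet_Ioi hF_int, Set.compl_Ioi]
  refine ⟨?_, ?_, gauss_tilt μ σ hσ ℓ⟩
  · -- lower bound
    have hA : ∫ y in Set.Ioi (0 : ℝ), (2 * κ * y) ^ p ∂(gaussianReal μ v)
        ≤ ∫ y in Set.Ioi (0 : ℝ), (Real.sqrt (1 + κ ^ 2 * y ^ 2) + κ * y) ^ p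
            ∂(gaussianReal μ v) := by
      refine setIntegral_mono_on ?_ hF_int.integrableOn measurableSet_Ioi
        (fun y hy => hlow_pos y (le_of_lt hy))
      refine Integrable.mono' hF_int.integrableOn ?_ ?_
      · exact ((Real.continuous_rpow_const hp0.le).comp
          (continuous_const.mul continuous_id)).aestronglyMeasurable
      · rw [ae_restrict_iff' measurableSet_Ioi]
        refine Filter.Eventually.of_forall fun y hy => ?_
        rw [Real.norm_eq_abs, abs_of_nonneg (Real.rpow_nonneg
          (mul_nonneg (by positivity) (le_of_lt hy)) _)]
        exact hlow_pos y (le_of_lt hy)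
    have hB2 : ∫ y in Set.Iio (0 : ℝ), Real.exp (ℓ * y) ∂(gaussianReal μ v)
        ≤ ∫ y in Set.Iic (0 : ℝ), (Real.sqrt (1 + κ ^ 2 * y ^ 2) + κ * y) ^ p
            ∂(gaussianReal μ v) := by
      have s1 : ∫ y in Set.Iio (0 : ℝ), Real.exp (ℓ * y) ∂(gaussianReal μ v)
          ≤ ∫ y in Set.Iio (0 : ℝ), (Real.sqrt (1 + κ ^ 2 * y ^ 2) + κ * y) ^ p
              ∂(gaussianReal μ v) := by
        refine setIntegral_mono_on ?_ hF_int.integrableOn measurableSet_Iio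
          (fun y hy => hlow_neg y (le_of_lt hy))
        refine Integrable.mono' (integrable_const (1 : ℝ)).integrableOn
          (Continuous.aestronglyMeasurable (by fun_prop)) ?_
        rw [ae_restrict_iff' measurableSet_Iio]
        refine Filter.Eventually.of_forall fun y hy => ?_
        rw [Real.norm_eq_abs, abs_of_nonneg (Real.exp_pos _).le]
        exact Real.exp_le_one_iff.mpr (mul_nonpos_of_nonneg_of_nonpos (Nat.cast_nonneg ℓ)
          (le_of_lt hy))
      refine le_trans s1 ?_
      refine setIntegral_mono_set hF_int.integrableOn
        (Filter.Eventually.of_forall fun y => Real.rpow_nonneg (g_pos κ y).le _)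
        (Filter.Eventually.of_forall fun y (hy : y ∈ Set.Iio 0) => le_of_lt hy)
    rw [hsplit]
    exact add_le_add hA hB2
  · -- upper bound
    rw [hsplit]
    refine add_le_add ?_ ?_
    · exact setIntegral_mono_on hF_int.integrableOn hB_int.integrableOn measurableSet_Ioi
        (fun y _ => hub y)
    · have h1 : ∫ y in Set.Iic (0 : ℝ), (Real.sqrt (1 + κ ^ 2 * y ^ 2) + κ * y) ^ p
          ∂(gaussianReal μ v) ≤ ∫ _ in Set.Iic (0 : ℝ), (1 : ℝ) ∂(gaussianReal μ v) :=
        setIntegral_mono_on hF_int.integrableOn (integrable_const _).integrableOn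
          measurableSet_Iic (fun y hy => hle_one y hy)
      refine le_trans h1 ?_
      rw [setIntegral_const]
      simp
      exact le_rfl
end

section
/- Fix κ > 0, μ ∈ ℝ and σ > 0, and let f_X(x) := (1/(2√(2π) σ)) · exp(−(ln_κ(x) − μ)²/(2σ²)) · (x^{κ−1} + x^{−κ−1}) for x > 0 be the κ-lognormal probability density. Set a := 2μκ, b := 1 − 4κσ²(κ−1), c := 4κσ²(κ+1) − 1, and define the characteristic polynomial p₁(z) := z⁶ − a z⁵ + b z⁴ − 2a z³ + c z² − a z − 1. Then for every x > 0, the derivative f_X′(x) vanishes if and only if p₁(x^κ) = 0; in particular the stationary points of the κ-lognormal density are exactly the points x = z^{1/κ} where z ranges over the positive real roots of p₁. -/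
/-- The characteristic polynomial `p₁(z) = z⁶ - a z⁵ + b z⁴ - 2a z³ + c z² - a z - 1`
with `a = 2μκ`, `b = 1 - 4κσ²(κ-1)`, `c = 4κσ²(κ+1) - 1`. -/
noncomputable def charPoly (κ μ σ z : ℝ) : ℝ :=
  z ^ 6 - (2 * μ * κ) * z ^ 5 + (1 - 4 * κ * σ ^ 2 * (κ - 1)) * z ^ 4
    - 2 * (2 * μ * κ) * z ^ 3 + (4 * κ * σ ^ 2 * (κ + 1) - 1) * z ^ 2
    - (2 * μ * κ) * z - 1

/-- For `x > 0`, the κ-lognormal density has a stationary point at `x` if and only if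
`x^κ` is a (positive) root of the characteristic polynomial `p₁`. -/
theorem kLNpdf_stationary_iff_charPoly_root (κ μ σ : ℝ) (hκ : 0 < κ) (hσ : 0 < σ) :
    ∀ x : ℝ, 0 < x →
      (deriv (fun t => kLNpdf κ μ σ t) x = 0 ↔ charPoly κ μ σ (x ^ κ) = 0) := by
  intro x hx
  set C : ℝ := 1 / (2 * Real.sqrt (2 * Real.pi) * σ) with hC
  -- derivatives of power functions
  have h1 : HasDerivAt (fun t : ℝ => t ^ κ) (κ * x ^ (κ - 1)) x :=
    Real.hasDerivAt_rpow_const (Or.inl hx.ne')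
  have h2 : HasDerivAt (fun t : ℝ => t ^ (-κ)) (-κ * x ^ (-κ - 1)) x :=
    Real.hasDerivAt_rpow_const (Or.inl hx.ne')
  have h3 : HasDerivAt (fun t : ℝ => t ^ (κ - 1)) ((κ - 1) * x ^ (κ - 1 - 1)) x :=
    Real.hasDerivAt_rpow_const (Or.inl hx.ne')
  have h4 : HasDerivAt (fun t : ℝ => t ^ (-κ - 1)) ((-κ - 1) * x ^ (-κ - 1 - 1)) x :=
    Real.hasDerivAt_rpow_const (Or.inl hx.ne')
  set L' : ℝ := (κ * x ^ (κ - 1) - -κ * x ^ (-κ - 1)) / (2 * κ) with hL'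
  have hL : HasDerivAt (fun t : ℝ => lnK κ t) L' x := by
    unfold lnK
    exact (h1.sub h2).div_const (2 * κ)
  set E' : ℝ := -(2 * (lnK κ x - μ) ^ 1 * L') / (2 * σ ^ 2) with hE'
  have hE : HasDerivAt (fun t : ℝ => -(lnK κ t - μ) ^ 2 / (2 * σ ^ 2)) E' x :=
    (((hL.sub_const μ).pow 2).neg).div_const (2 * σ ^ 2)
  have hexp : HasDerivAt (fun t : ℝ => Real.exp (-(lnK κ t - μ) ^ 2 / (2 * σ ^ 2)))
      (Real.exp (-(lnK κ x - μ) ^ 2 / (2 * σ ^ 2)) * E') x := hE.exp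
  have hH : HasDerivAt (fun t : ℝ => t ^ (κ - 1) + t ^ (-κ - 1))
      ((κ - 1) * x ^ (κ - 1 - 1) + (-κ - 1) * x ^ (-κ - 1 - 1)) x := h3.add h4
  set Ex : ℝ := Real.exp (-(lnK κ x - μ) ^ 2 / (2 * σ ^ 2)) with hEx
  set H : ℝ := x ^ (κ - 1) + x ^ (-κ - 1) with hHx
  set H' : ℝ := (κ - 1) * x ^ (κ - 1 - 1) + (-κ - 1) * x ^ (-κ - 1 - 1) with hH'
  have hF : HasDerivAt (fun t => kLNpdf κ μ σ t)
      (C * (Ex * E' * H + Ex * H')) x := by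
    have h0 := (hexp.mul hH).const_mul C
    have hfun : (fun t => kLNpdf κ μ σ t)
        = fun y => C * (Real.exp (-(lnK κ y - μ) ^ 2 / (2 * σ ^ 2)) *
            (y ^ (κ - 1) + y ^ (-κ - 1))) := by
      funext t; unfold kLNpdf; rw [hC]; ring
    rw [hfun]
    exact h0
  rw [hF.deriv]
  have hCpos : 0 < C := by rw [hC]; positivity
  have hExpos : 0 < Ex := Real.exp_pos _
  set z : ℝ := x ^ κ with hz
  have hzpos : 0 < z := Real.rpow_pos_of_pos hx κ
  have e1 : x ^ (-κ) = z⁻¹ := by rw [Real.rpow_neg hx.le]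
  have e2 : x ^ (κ - 1) = z / x := by rw [Real.rpow_sub hx, Real.rpow_one]
  have e3 : x ^ (-κ - 1) = z⁻¹ / x := by
    rw [Real.rpow_sub hx, Real.rpow_one, Real.rpow_neg hx.le]
  have e4 : x ^ (κ - 1 - 1) = z / x / x := by
    rw [Real.rpow_sub hx, Real.rpow_sub hx, Real.rpow_one]
  have e5 : x ^ (-κ - 1 - 1) = z⁻¹ / x / x := by
    rw [Real.rpow_sub hx, Real.rpow_sub hx, Real.rpow_one, Real.rpow_neg hx.le]
  have key : E' * H + H' = -(charPoly κ μ σ z) / (4 * κ * σ ^ 2 * x ^ 2 * z ^ 3) := by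
    rw [hE', hL', hHx, hH', charPoly]
    unfold lnK
    rw [e1, e2, e3, e4, e5]
    field_simp
    ring
  have factor : C * (Ex * E' * H + Ex * H') = (C * Ex) * (E' * H + H') := by ring
  have hden : (4 * κ * σ ^ 2 * x ^ 2 * z ^ 3) ≠ 0 := by positivity
  rw [factor, key]
  constructor
  · intro h
    rcases mul_eq_zero.mp h with h | h
    · exact absurd h (by positivity)
    · rcases div_eq_zero_iff.mp h with h | h
      · linarith [neg_eq_zero.mp h]
      · exact absurd h hden
  · intro h
    rw [h]
    simp
end

section
/- Fix κ with 0 < κ ≤ 1, μ ∈ ℝ and σ > 0, and let f_X(x) := (1/(2√(2π) σ)) · exp(−(ln_κ(x) − μ)²/(2σ²)) · (x^{κ−1} + x^{−κ−1}) for x > 0 be the κ-lognormal probability density, and let μ_{0.5} := exp_κ(μ) denote the median. Then f_X′(x) < 0 for every x ≥ μ_{0.5}, and there exists a point x* ∈ (0, μ_{0.5}) with f_X′(x*) = 0 at which f_X attains a local maximum; hence all modes of the κ-lognormal density with 0 < κ ≤ 1 lie in the interval (0, μ_{0.5}). -/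
lemma base_pos (κ μ : ℝ) : 0 < Real.sqrt (1 + κ ^ 2 * μ ^ 2) + κ * μ := by
  have hs : |κ * μ| < Real.sqrt (1 + κ ^ 2 * μ ^ 2) := by
    rw [← Real.sqrt_sq_eq_abs]
    apply Real.sqrt_lt_sqrt (sq_nonneg _)
    nlinarith
  rcases abs_lt.mp hs with ⟨h1, h2⟩
  linarith

lemma expK_pos (κ μ : ℝ) : 0 < expK κ μ :=
  Real.rpow_pos_of_pos (base_pos κ μ) _

lemma lnK_expK (κ μ : ℝ) (hκ : 0 < κ) : lnK κ (expK κ μ) = μ := by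
  have hb := base_pos κ μ
  set s := Real.sqrt (1 + κ ^ 2 * μ ^ 2) with hs
  have hs2 : s ^ 2 = 1 + κ ^ 2 * μ ^ 2 := Real.sq_sqrt (by positivity)
  have hb1 : (s + κ * μ) * (s - κ * μ) = 1 := by nlinarith
  have e1 : ((s + κ * μ) ^ (1 / κ)) ^ κ = s + κ * μ := by
    rw [← Real.rpow_mul hb.le, one_div, inv_mul_cancel₀ hκ.ne', Real.rpow_one]
  have e2 : ((s + κ * μ) ^ (1 / κ)) ^ (-κ) = s - κ * μ := by
    rw [Real.rpow_neg (Real.rpow_pos_of_pos hb _).le, e1,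
      inv_eq_of_mul_eq_one_right hb1]
  show (((s + κ * μ) ^ (1/κ)) ^ κ - ((s + κ * μ) ^ (1/κ)) ^ (-κ)) / (2 * κ) = μ
  rw [e1, e2]
  field_simp
  ring

lemma lnK_mono (κ : ℝ) (hκ : 0 < κ) {a x : ℝ} (ha : 0 < a) (hax : a ≤ x) :
    lnK κ a ≤ lnK κ x := by
  have hx : 0 < x := lt_of_lt_of_le ha hax
  have h1 : a ^ κ ≤ x ^ κ := Real.rpow_le_rpow ha.le hax hκ.le
  have h2 : x ^ (-κ) ≤ a ^ (-κ) := by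
    rw [Real.rpow_neg hx.le, Real.rpow_neg ha.le]
    exact inv_anti₀ (Real.rpow_pos_of_pos ha κ) h1
  unfold lnK
  have h3 : a ^ κ - a ^ (-κ) ≤ x ^ κ - x ^ (-κ) := by linarith
  gcongr

lemma kLN_hasDeriv (κ μ σ : ℝ) (hκ : 0 < κ) (hσ : σ ≠ 0) {x : ℝ} (hx : 0 < x) :
    HasDerivAt (fun t => kLNpdf κ μ σ t)
      ((1 / (2 * Real.sqrt (2 * Real.pi) * σ)) * Real.exp (-(lnK κ x - μ) ^ 2 / (2 * σ ^ 2)) *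
        ((-(lnK κ x - μ) * ((x ^ (κ - 1) + x ^ (-κ - 1)) / 2) / σ ^ 2) *
            (x ^ (κ - 1) + x ^ (-κ - 1)) +
          ((κ - 1) * x ^ (κ - 2) + (-κ - 1) * x ^ (-κ - 2)))) x := by
  have hxne := hx.ne'
  have hL : HasDerivAt (fun t => lnK κ t) ((x ^ (κ - 1) + x ^ (-κ - 1)) / 2) x := by
    have h1 : HasDerivAt (fun t : ℝ => t ^ κ) (κ * x ^ (κ - 1)) x :=
      Real.hasDerivAt_rpow_const (Or.inl hxne)
    have h2 : HasDerivAt (fun t : ℝ => t ^ (-κ)) (-κ * x ^ (-κ - 1)) x :=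
      Real.hasDerivAt_rpow_const (Or.inl hxne)
    have h := (h1.sub h2).div_const (2 * κ)
    refine h.congr_deriv ?_
    field_simp
    ring
  have hG : HasDerivAt (fun t => -(lnK κ t - μ) ^ 2 / (2 * σ ^ 2))
      (-(lnK κ x - μ) * ((x ^ (κ - 1) + x ^ (-κ - 1)) / 2) / σ ^ 2) x := by
    have h := (((hL.sub_const μ).pow 2).neg).div_const (2 * σ ^ 2)
    refine h.congr_deriv ?_
    field_simp
    ring
  have hE : HasDerivAt (fun t => Real.exp (-(lnK κ t - μ) ^ 2 / (2 * σ ^ 2)))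
      (Real.exp (-(lnK κ x - μ) ^ 2 / (2 * σ ^ 2)) *
        (-(lnK κ x - μ) * ((x ^ (κ - 1) + x ^ (-κ - 1)) / 2) / σ ^ 2)) x := hG.exp
  have hP : HasDerivAt (fun t : ℝ => t ^ (κ - 1) + t ^ (-κ - 1))
      ((κ - 1) * x ^ (κ - 2) + (-κ - 1) * x ^ (-κ - 2)) x := by
    have h1 : HasDerivAt (fun t : ℝ => t ^ (κ - 1)) ((κ - 1) * x ^ (κ - 1 - 1)) x :=
      Real.hasDerivAt_rpow_const (Or.inl hxne)
    have h2 : HasDerivAt (fun t : ℝ => t ^ (-κ - 1)) ((-κ - 1) * x ^ (-κ - 1 - 1)) x :=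
      Real.hasDerivAt_rpow_const (Or.inl hxne)
    have h := h1.add h2
    refine h.congr_deriv ?_
    ring_nf
  have h := (hE.const_mul (1 / (2 * Real.sqrt (2 * Real.pi) * σ))).mul hP
  refine h.congr_deriv ?_
  ring

-- the bracket expression, for sign analysis
lemma bracket_neg (κ μ σ : ℝ) (hκ : 0 < κ) (hκ1 : κ ≤ 1) (hσ : 0 < σ) {x : ℝ}
    (hx : 0 < x) (hμ : μ ≤ lnK κ x) :
    (-(lnK κ x - μ) * ((x ^ (κ - 1) + x ^ (-κ - 1)) / 2) / σ ^ 2) *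
        (x ^ (κ - 1) + x ^ (-κ - 1)) +
      ((κ - 1) * x ^ (κ - 2) + (-κ - 1) * x ^ (-κ - 2)) < 0 := by
  have hp1 : 0 < x ^ (κ - 1) := Real.rpow_pos_of_pos hx _
  have hp2 : 0 < x ^ (-κ - 1) := Real.rpow_pos_of_pos hx _
  have hp3 : 0 < x ^ (κ - 2) := Real.rpow_pos_of_pos hx _
  have hp4 : 0 < x ^ (-κ - 2) := Real.rpow_pos_of_pos hx _
  have ht1 : (-(lnK κ x - μ) * ((x ^ (κ - 1) + x ^ (-κ - 1)) / 2) / σ ^ 2) *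
      (x ^ (κ - 1) + x ^ (-κ - 1)) ≤ 0 := by
    apply mul_nonpos_of_nonpos_of_nonneg _ (by positivity)
    apply div_nonpos_of_nonpos_of_nonneg _ (by positivity)
    apply mul_nonpos_of_nonpos_of_nonneg (by linarith) (by positivity)
  have ht2 : (κ - 1) * x ^ (κ - 2) ≤ 0 :=
    mul_nonpos_of_nonpos_of_nonneg (by linarith) hp3.le
  have ht3 : (-κ - 1) * x ^ (-κ - 2) < 0 :=
    mul_neg_of_neg_of_pos (by linarith) hp4
  linarith

lemma key_pos (κ A a b c d v : ℝ) (hκ1 : κ ≤ 1) (h4 : 4 ≤ A) (ha : 0 < a) (hb : 0 < b)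
    (hd : 0 < d) (hcd : c ≤ d) (hbb : b * b = v * d) (hv : 2 ≤ v) :
    0 < A * ((a + b) ^ 2 / 2) + ((κ - 1) * c + (-κ - 1) * d) := by
  have h1 : 2 * d ≤ v * d := by nlinarith
  have h2 : v * d ≤ (a + b) ^ 2 := by nlinarith [sq_nonneg a, mul_pos ha hb]
  have h3 : 8 * d ≤ A * (a + b) ^ 2 := by nlinarith [sq_nonneg (a + b)]
  have h5 : (κ - 1) * d ≤ (κ - 1) * c := mul_le_mul_of_nonpos_left hcd (by linarith)
  have e : A * ((a + b) ^ 2 / 2) = (A * (a + b) ^ 2) / 2 := by ring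
  rw [e]
  linarith

lemma bracket_pos (κ μ σ : ℝ) (hκ : 0 < κ) (hκ1 : κ ≤ 1) (hσ : 0 < σ) {x : ℝ}
    (hx : 0 < x) (hx1 : x ≤ 1) (hμ : 4 * σ ^ 2 ≤ μ - lnK κ x) (hinv : 2 ≤ x ^ (-κ)) :
    0 < (-(lnK κ x - μ) * ((x ^ (κ - 1) + x ^ (-κ - 1)) / 2) / σ ^ 2) *
        (x ^ (κ - 1) + x ^ (-κ - 1)) +
      ((κ - 1) * x ^ (κ - 2) + (-κ - 1) * x ^ (-κ - 2)) := by
  have hσ2 : (0:ℝ) < σ ^ 2 := by positivity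
  have hp1 : 0 < x ^ (κ - 1) := Real.rpow_pos_of_pos hx _
  have hp2 : 0 < x ^ (-κ - 1) := Real.rpow_pos_of_pos hx _
  have hp4 : 0 < x ^ (-κ - 2) := Real.rpow_pos_of_pos hx _
  have hcmp : x ^ (κ - 2) ≤ x ^ (-κ - 2) :=
    Real.rpow_le_rpow_of_exponent_ge hx hx1 (by linarith)
  have hmul : x ^ (-κ - 1) * x ^ (-κ - 1) = x ^ (-κ) * x ^ (-κ - 2) := by
    rw [← Real.rpow_add hx, ← Real.rpow_add hx]; ring_nf
  have h4 : (4:ℝ) ≤ (μ - lnK κ x) / σ ^ 2 := by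
    rw [le_div_iff₀ hσ2]; linarith
  have e : (-(lnK κ x - μ) * ((x ^ (κ - 1) + x ^ (-κ - 1)) / 2) / σ ^ 2) *
      (x ^ (κ - 1) + x ^ (-κ - 1)) =
      ((μ - lnK κ x) / σ ^ 2) * ((x ^ (κ - 1) + x ^ (-κ - 1)) ^ 2 / 2) := by ring
  rw [e]
  exact key_pos κ _ _ _ _ _ _ hκ1 h4 hp1 hp2 hp4 hcmp hmul hinv

lemma exists_gt_left {f : ℝ → ℝ} {x d a : ℝ} (hf : HasDerivAt f d x)
    (hd : d < 0) (ha : a < x) : ∃ y, a < y ∧ y < x ∧ f x < f y := by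
  have h := hasDerivAt_iff_tendsto_slope.mp hf
  have h2 : Filter.Tendsto (slope f x) (nhdsWithin x (Set.Iio x)) (nhds d) :=
    h.mono_left (nhdsWithin_mono x (fun y hy => ne_of_lt hy))
  have h3 : ∀ᶠ y in nhdsWithin x (Set.Iio x), slope f x y < 0 :=
    h2.eventually_lt_const hd  -- FIX if needed
  have h4 : Set.Ioo a x ∈ nhdsWithin x (Set.Iio x) :=
    Ioo_mem_nhdsLT_of_mem ⟨ha, le_refl x⟩
  have h5 := h3.and (Filter.eventually_of_mem h4 (fun y hy => hy))
  obtain ⟨y, hs, hy⟩ := h5.exists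
  refine ⟨y, hy.1, hy.2, ?_⟩
  rw [slope_def_field] at hs
  have hden : y - x < 0 := by linarith [hy.2]
  rcases div_neg_iff.mp hs with ⟨hn, _⟩ | ⟨_, hp⟩
  · linarith
  · linarith

lemma exists_gt_right {f : ℝ → ℝ} {x d b : ℝ} (hf : HasDerivAt f d x)
    (hd : 0 < d) (hb : x < b) : ∃ y, x < y ∧ y < b ∧ f x < f y := by
  have h := hasDerivAt_iff_tendsto_slope.mp hf
  have h2 : Filter.Tendsto (slope f x) (nhdsWithin x (Set.Ioi x)) (nhds d) :=
    h.mono_left (nhdsWithin_mono x (fun y hy => ne_of_gt hy))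
  have h3 : ∀ᶠ y in nhdsWithin x (Set.Ioi x), 0 < slope f x y :=
    h2.eventually_const_lt hd
  have h4 : Set.Ioo x b ∈ nhdsWithin x (Set.Ioi x) :=
    Ioo_mem_nhdsGT_of_mem ⟨le_refl x, hb⟩
  have h5 := h3.and (Filter.eventually_of_mem h4 (fun y hy => hy))
  obtain ⟨y, hs, hy⟩ := h5.exists
  refine ⟨y, hy.1, hy.2, ?_⟩
  rw [slope_def_field] at hs
  have hden : 0 < y - x := by linarith [hy.1]
  rcases div_pos_iff.mp hs with ⟨hn, _⟩ | ⟨_, hp⟩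
  · linarith
  · linarith

/-- For `0 < κ ≤ 1`, the κ-lognormal density is strictly decreasing at and beyond the
median `μ₀.₅ = expK κ μ`, and has a stationary point in `(0, μ₀.₅)` which is a local
maximum; hence all modes lie in `(0, μ₀.₅)`. -/
theorem kLNpdf_modes_below_median (κ μ σ : ℝ) (hκ : 0 < κ) (hκ1 : κ ≤ 1) (hσ : 0 < σ) :
    (∀ x : ℝ, expK κ μ ≤ x → deriv (fun t => kLNpdf κ μ σ t) x < 0) ∧
    (∃ x : ℝ, x ∈ Set.Ioo 0 (expK κ μ) ∧ deriv (fun t => kLNpdf κ μ σ t) x = 0 ∧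
      IsLocalMax (fun t => kLNpdf κ μ σ t) x) := by
  have hm0 : 0 < expK κ μ := expK_pos κ μ
  have hCpos : ∀ x : ℝ, 0 < (1 / (2 * Real.sqrt (2 * Real.pi) * σ)) *
      Real.exp (-(lnK κ x - μ) ^ 2 / (2 * σ ^ 2)) := by
    intro x
    have h2π : 0 < Real.sqrt (2 * Real.pi) := Real.sqrt_pos.mpr (by positivity)
    positivity
  have part1 : ∀ x : ℝ, expK κ μ ≤ x → deriv (fun t => kLNpdf κ μ σ t) x < 0 := by
    intro x hx
    have hx0 : 0 < x := hm0.trans_le hx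
    have hd := kLN_hasDeriv κ μ σ hκ hσ.ne' hx0
    rw [hd.deriv]
    have hlnK : μ ≤ lnK κ x := by
      rw [← lnK_expK κ μ hκ]; exact lnK_mono κ hκ hm0 hx
    exact mul_neg_of_pos_of_neg (hCpos x) (bracket_neg κ μ σ hκ hκ1 hσ hx0 hlnK)
  refine ⟨part1, ?_⟩
  set δ : ℝ := min (expK κ (μ - 4 * σ ^ 2)) ((1 / 2 : ℝ) ^ (1 / κ)) with hδdef
  have hδ0 : 0 < δ :=
    lt_min (expK_pos κ _) (Real.rpow_pos_of_pos (by norm_num) _)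
  have hδm : δ < expK κ μ := by
    have h : expK κ (μ - 4 * σ ^ 2) < expK κ μ := by
      by_contra h
      push_neg at h
      have h2 := lnK_mono κ hκ hm0 h
      rw [lnK_expK κ μ hκ, lnK_expK κ (μ - 4 * σ ^ 2) hκ] at h2
      nlinarith
    exact (min_le_left _ _).trans_lt h
  -- derivative is positive at δ
  have hbrδ : ∀ x : ℝ, 0 < x → x ≤ δ →
      0 < (-(lnK κ x - μ) * ((x ^ (κ - 1) + x ^ (-κ - 1)) / 2) / σ ^ 2) *
          (x ^ (κ - 1) + x ^ (-κ - 1)) +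
        ((κ - 1) * x ^ (κ - 2) + (-κ - 1) * x ^ (-κ - 2)) := by
    intro x hx0 hxδ
    have hx2 : x ≤ (1 / 2 : ℝ) ^ (1 / κ) := hxδ.trans (min_le_right _ _)
    have hxe : x ≤ expK κ (μ - 4 * σ ^ 2) := hxδ.trans (min_le_left _ _)
    have he : ((1 / 2 : ℝ) ^ (1 / κ)) ^ κ = 1 / 2 := by
      rw [← Real.rpow_mul (by norm_num : (0:ℝ) ≤ 1 / 2), one_div κ,
        inv_mul_cancel₀ hκ.ne', Real.rpow_one]
    have hxκ : x ^ κ ≤ 1 / 2 := by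
      calc x ^ κ ≤ ((1 / 2 : ℝ) ^ (1 / κ)) ^ κ := Real.rpow_le_rpow hx0.le hx2 hκ.le
        _ = 1 / 2 := he
    have hx1 : x ≤ 1 :=
      hx2.trans (Real.rpow_le_one (by norm_num) (by norm_num) (by positivity))
    have hinv : 2 ≤ x ^ (-κ) := by
      rw [Real.rpow_neg hx0.le]
      have h2 : ((1:ℝ) / 2)⁻¹ ≤ (x ^ κ)⁻¹ :=
        inv_anti₀ (Real.rpow_pos_of_pos hx0 κ) hxκ
      norm_num at h2
      exact h2
    have hμ4 : 4 * σ ^ 2 ≤ μ - lnK κ x := by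
      have h := lnK_mono κ hκ hx0 hxe
      rw [lnK_expK κ (μ - 4 * σ ^ 2) hκ] at h
      linarith
    exact bracket_pos κ μ σ hκ hκ1 hσ hx0 hx1 hμ4 hinv
  -- maximum on [δ, m]
  have hcont : ContinuousOn (fun t => kLNpdf κ μ σ t) (Set.Icc δ (expK κ μ)) := fun y hy =>
    ((kLN_hasDeriv κ μ σ hκ hσ.ne' (hδ0.trans_le hy.1)).continuousAt).continuousWithinAt
  obtain ⟨c, hcmem, hcmax⟩ :=
    isCompact_Icc.exists_isMaxOn (Set.nonempty_Icc.mpr hδm.le) hcont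
  have hmaxle : ∀ y ∈ Set.Icc δ (expK κ μ),
      kLNpdf κ μ σ y ≤ kLNpdf κ μ σ c := fun y hy => hcmax hy
  -- c is not δ
  have hdδ := kLN_hasDeriv κ μ σ hκ hσ.ne' hδ0
  obtain ⟨y1, hy1a, hy1b, hy1f⟩ :=
    exists_gt_right hdδ (mul_pos (hCpos δ) (hbrδ δ hδ0 le_rfl)) hδm
  have hne1 : c ≠ δ := by
    intro h
    have := hmaxle y1 ⟨hy1a.le, hy1b.le⟩
    rw [h] at this
    exact absurd this (not_le.mpr hy1f)
  -- c is not m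
  have hdm := kLN_hasDeriv κ μ σ hκ hσ.ne' hm0
  have hlnKm : μ ≤ lnK κ (expK κ μ) := (lnK_expK κ μ hκ).ge
  obtain ⟨y2, hy2a, hy2b, hy2f⟩ :=
    exists_gt_left hdm
      (mul_neg_of_pos_of_neg (hCpos _) (bracket_neg κ μ σ hκ hκ1 hσ hm0 hlnKm)) hδm
  have hne2 : c ≠ expK κ μ := by
    intro h
    have := hmaxle y2 ⟨hy2a.le, hy2b.le⟩
    rw [h] at this
    exact absurd this (not_le.mpr hy2f)
  have hcI : c ∈ Set.Ioo δ (expK κ μ) :=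
    ⟨lt_of_le_of_ne hcmem.1 (Ne.symm hne1), lt_of_le_of_ne hcmem.2 hne2⟩
  have hloc : IsLocalMax (fun t => kLNpdf κ μ σ t) c := by
    have hnh : Set.Icc δ (expK κ μ) ∈ nhds c := Icc_mem_nhds hcI.1 hcI.2
    exact Filter.eventually_of_mem hnh (fun y hy => hmaxle y hy)
  exact ⟨c, ⟨hδ0.trans hcI.1, hcI.2⟩, hloc.deriv_eq_zero, hloc⟩
end
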